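/- arXiv:2502.04812 — 3 statements merged into one kernel-verified Lean document; each statement's English description precedes it below -/
import Mathlib

section
/- Let $N \geq 2$, $\alpha \in [0,1)$, and let $\Omega \subset \mathbb{R}^N$ be an unbounded domain contained in an open affine half-space. Let $f \in C^0(\mathbb{R})$ satisfy: there exists $\zeta > 0$ with $f(t) \leq 0$ for all $t \in [\zeta, +\infty)$. Let $u \in C^0(\overline{\Omega}) \cap C^2(\Omega)$ satisfy $-\Delta u \leq f(u)$ in $\Omega$, $u \leq 0$ on $\partial\Omega$, and $u^+(x) = O(|x|^\alpha)$ as $|x| \to \infty$. Then $u \leq \zeta$ on $\Omega$. -/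
open MeasureTheory Metric Set Real Filter ENNReal

noncomputable section

abbrev Euc (N : ℕ) := EuclideanSpace ℝ (Fin N)

/-- Smooth test functions compactly supported in `D`. -/
def TestFn {N : ℕ} (D : Set (Euc N)) (φ : Euc N → ℝ) : Prop :=
  ContDiff ℝ (⊤ : ℕ∞) φ ∧ HasCompactSupport φ ∧ tsupport φ ⊆ D

/-- The Laplacian of `u` at `x`, as the sum of the pure second partial derivatives. -/
noncomputable def lap {N : ℕ} (u : Euc N → ℝ) (x : Euc N) : ℝ :=
  ∑ i : Fin N, fderiv ℝ (fun y => fderiv ℝ u y (EuclideanSpace.single i 1)) x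
    (EuclideanSpace.single i 1)

namespace StmtSeven

lemma inner_self_hasFDerivAt (N : ℕ) (y : Euc N) :
    HasFDerivAt (fun x : Euc N => (inner ℝ x x : ℝ)) ((2:ℝ) • innerSL ℝ y) y := by
  have h := (hasFDerivAt_id y).inner ℝ (hasFDerivAt_id y)
  refine h.congr_fderiv ?_
  ext v
  simp only [ContinuousLinearMap.smul_apply, ContinuousLinearMap.coe_comp', Function.comp_apply,
    ContinuousLinearMap.prod_apply, fderivInnerCLM_apply, innerSL_apply_apply, id_eq,
    ContinuousLinearMap.coe_id', smul_eq_mul]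
  rw [real_inner_comm v y]
  ring

variable {N : ℕ}

lemma quad_hasFDerivAt (a bb k k₀ : ℝ) (w : Euc N) (y : Euc N) :
    HasFDerivAt (fun x : Euc N => a * (inner ℝ x x : ℝ)
        + bb * ((inner ℝ w x : ℝ) * (inner ℝ w x : ℝ)) + k * (inner ℝ w x : ℝ) + k₀)
      ((2*a) • innerSL ℝ y + (2*bb*(inner ℝ w y : ℝ) + k) • innerSL ℝ w) y := by
  have h1 := (inner_self_hasFDerivAt N y).const_mul a
  have h2 : HasFDerivAt (fun x : Euc N => (inner ℝ w x : ℝ)) (innerSL ℝ w) y :=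
    (innerSL ℝ w).hasFDerivAt
  have h := ((h1.add ((h2.mul h2).const_mul bb)).add (h2.const_mul k)).add_const k₀
  refine h.congr_fderiv ?_
  ext v
  simp only [ContinuousLinearMap.add_apply, ContinuousLinearMap.smul_apply, innerSL_apply_apply,
    smul_eq_mul]
  ring

lemma quad_fderiv_apply (a bb k k₀ : ℝ) (w : Euc N) (e : Euc N) :
    (fun y : Euc N => fderiv ℝ (fun x : Euc N => a * (inner ℝ x x : ℝ)
        + bb * ((inner ℝ w x : ℝ) * (inner ℝ w x : ℝ)) + k * (inner ℝ w x : ℝ) + k₀) y e)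
      = fun y : Euc N => 2*a*(inner ℝ e y : ℝ) + (2*bb*(inner ℝ e w : ℝ))*(inner ℝ w y : ℝ)
          + k*(inner ℝ w e : ℝ) := by
  funext y
  rw [(quad_hasFDerivAt a bb k k₀ w y).fderiv]
  simp only [ContinuousLinearMap.add_apply, ContinuousLinearMap.smul_apply, innerSL_apply_apply,
    smul_eq_mul]
  rw [real_inner_comm y e, real_inner_comm e w]
  ring

lemma lap_quad (a bb k k₀ : ℝ) (w : Euc N) (x : Euc N) :
    lap (fun x : Euc N => a * (inner ℝ x x : ℝ)
        + bb * ((inner ℝ w x : ℝ) * (inner ℝ w x : ℝ)) + k * (inner ℝ w x : ℝ) + k₀) x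
      = 2*a*N + 2*bb*(inner ℝ w w : ℝ) := by
  unfold lap
  have hterm : ∀ i : Fin N,
      fderiv ℝ (fun y => fderiv ℝ (fun x : Euc N => a * (inner ℝ x x : ℝ)
        + bb * ((inner ℝ w x : ℝ) * (inner ℝ w x : ℝ)) + k * (inner ℝ w x : ℝ) + k₀) y
          (EuclideanSpace.single i 1)) x (EuclideanSpace.single i 1)
      = 2*a + 2*bb*((w i) * (w i)) := by
    intro i
    set e : Euc N := EuclideanSpace.single i (1:ℝ) with he
    rw [quad_fderiv_apply a bb k k₀ w e]
    have h2e : HasFDerivAt (fun y : Euc N => (inner ℝ e y : ℝ)) (innerSL ℝ e) x :=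
      (innerSL ℝ e).hasFDerivAt
    have h2w : HasFDerivAt (fun y : Euc N => (inner ℝ w y : ℝ)) (innerSL ℝ w) x :=
      (innerSL ℝ w).hasFDerivAt
    have h := ((h2e.const_mul (2*a)).add ((h2w.const_mul (2*bb*(inner ℝ e w : ℝ))))).add_const
      (k*(inner ℝ w e : ℝ))
    have hfd : fderiv ℝ (fun y : Euc N => 2*a*(inner ℝ e y : ℝ)
        + (2*bb*(inner ℝ e w : ℝ))*(inner ℝ w y : ℝ) + k*(inner ℝ w e : ℝ)) x
        = (2*a) • innerSL ℝ e + (2*bb*(inner ℝ e w : ℝ)) • innerSL ℝ w := by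
      exact h.fderiv
    rw [hfd]
    have hee : (inner ℝ e e : ℝ) = 1 := by
      simp [he, EuclideanSpace.inner_single_left, EuclideanSpace.single_apply]
    have hwe : (inner ℝ e w : ℝ) = w i := by
      simp [he, EuclideanSpace.inner_single_left]
    have hwe' : (inner ℝ w e : ℝ) = w i := by rw [real_inner_comm]; exact hwe
    simp only [ContinuousLinearMap.add_apply, ContinuousLinearMap.smul_apply, innerSL_apply_apply,
      smul_eq_mul, hee, hwe, hwe']
    ring
  rw [Finset.sum_congr rfl (fun i _ => hterm i)]
  rw [Finset.sum_add_distrib, Finset.sum_const, ← Finset.mul_sum]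
  have hww : (inner ℝ w w : ℝ) = ∑ i : Fin N, w i * w i := by
    simp only [PiLp.inner_apply, RCLike.inner_apply, conj_trivial]
  rw [← hww, Finset.card_univ, Fintype.card_fin, nsmul_eq_mul]
  ring

lemma second_diff {F : Euc N → ℝ} {x : Euc N} (hF : ContDiffAt ℝ 2 F x) (e : Euc N) :
    DifferentiableAt ℝ (fun y => fderiv ℝ F y e) x := by
  have h1 : ContDiffAt ℝ 1 (fderiv ℝ F) x := hF.fderiv_right (by norm_num)
  exact (h1.differentiableAt (by norm_num)).clm_apply (differentiableAt_const e)

lemma lap_sub {F G : Euc N → ℝ} {x : Euc N}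
    (hF : ContDiffAt ℝ 2 F x) (hG : ContDiff ℝ 2 G) :
    lap (fun y => F y - G y) x = lap F x - lap G x := by
  have hFd : ∀ᶠ y in nhds x, DifferentiableAt ℝ F y := by
    filter_upwards [hF.eventually (by norm_num)] with y hy
    exact hy.differentiableAt (by norm_num)
  unfold lap
  rw [← Finset.sum_sub_distrib]
  refine Finset.sum_congr rfl (fun i _ => ?_)
  set e : Euc N := EuclideanSpace.single i (1:ℝ)
  have h1 : (fun y => fderiv ℝ (fun z => F z - G z) y e)
      =ᶠ[nhds x] (fun y => fderiv ℝ F y e - fderiv ℝ G y e) := by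
    filter_upwards [hFd] with y hy
    rw [fderiv_fun_sub hy ((hG.differentiable (by norm_num)) y)]
    simp
  rw [h1.fderiv_eq, fderiv_fun_sub (second_diff hF e) (second_diff hG.contDiffAt e)]
  simp

lemma maxp {O : Set (Euc N)} (hO : IsOpen O) (hb : Bornology.IsBounded O)
    {g : Euc N → ℝ} (hgc : ContinuousOn g (closure O))
    (hg2 : ∀ x ∈ O, ContDiffAt ℝ 2 g x)
    (hsub : ∀ x ∈ O, 0 < lap g x)
    {b : ℝ} (hfr : ∀ y ∈ frontier O, g y ≤ b) :
    ∀ x ∈ O, g x ≤ b := by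
  intro x hx
  have hne : (closure O).Nonempty := ⟨x, subset_closure hx⟩
  obtain ⟨z, hz, hmax⟩ := hb.isCompact_closure.exists_isMaxOn hne hgc
  rcases em (z ∈ O) with hzO | hzO
  · exfalso
    have hloc : IsLocalMax g z :=
      hmax.isLocalMax (mem_of_superset (hO.mem_nhds hzO) subset_closure)
    have hpos := hsub z hzO
    have hex : ∃ i : Fin N, 0 < fderiv ℝ
        (fun y => fderiv ℝ g y (EuclideanSpace.single i 1)) z (EuclideanSpace.single i 1) := by
      by_contra hcon
      push_neg at hcon
      have : lap g z ≤ 0 := Finset.sum_nonpos (fun i _ => hcon i)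
      linarith
    obtain ⟨i, hi⟩ := hex
    set e : Euc N := EuclideanSpace.single i (1:ℝ) with he
    have h2 := hg2 z hzO
    set L : ℝ → Euc N := fun τ => z + τ • e with hLdef
    have hL : ∀ τ : ℝ, HasDerivAt L e τ := by
      intro τ
      have := ((hasDerivAt_id τ).smul_const e).const_add z
      simpa [hLdef] using this
    have hL0 : L 0 = z := by simp [hLdef]
    have hLt : Tendsto L (nhds 0) (nhds z) := by
      have := (hL 0).continuousAt.tendsto
      rwa [hL0] at this
    set φ : ℝ → ℝ := fun τ => fderiv ℝ g (L τ) e with hφdef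
    set ψ : ℝ → ℝ := fun τ => g (L τ) with hψdef
    have hψ : ∀ τ : ℝ, L τ ∈ O → HasDerivAt ψ (φ τ) τ := by
      intro τ hτ
      have hd : DifferentiableAt ℝ g (L τ) := (hg2 _ hτ).differentiableAt (by norm_num)
      exact hd.hasFDerivAt.comp_hasDerivAt τ (hL τ)
    have hφ0 : φ 0 = 0 := by
      have h0 : HasDerivAt ψ (φ 0) 0 := hψ 0 (by rw [hL0]; exact hzO)
      have hlψ : IsLocalMax ψ 0 := by
        have : ∀ᶠ τ in nhds (0:ℝ), g (L τ) ≤ g z := hLt.eventually hloc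
        simpa [hψdef, IsLocalMax, IsMaxFilter, hL0] using this
      exact hlψ.hasDerivAt_eq_zero h0
    have hF' : DifferentiableAt ℝ (fun y => fderiv ℝ g y e) (L 0) := by
      rw [hL0]; exact second_diff h2 e
    have hφ' : HasDerivAt φ (fderiv ℝ (fun y => fderiv ℝ g y e) z e) 0 := by
      have := hF'.hasFDerivAt.comp_hasDerivAt 0 (hL 0)
      rwa [hL0] at this
    have hslope : Tendsto (slope φ 0) (nhdsWithin 0 {(0:ℝ)}ᶜ)
        (nhds (fderiv ℝ (fun y => fderiv ℝ g y e) z e)) :=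
      hasDerivAt_iff_tendsto_slope.mp hφ'
    have hev1 : ∀ᶠ τ in nhdsWithin 0 {(0:ℝ)}ᶜ, 0 < slope φ 0 τ :=
      hslope.eventually (eventually_gt_nhds hi)
    have hev1' : ∀ᶠ τ in nhdsWithin (0:ℝ) (Set.Ioi 0), 0 < slope φ 0 τ :=
      nhdsWithin_mono 0 (fun τ (hτ : τ ∈ Set.Ioi 0) => ne_of_gt hτ) hev1
    have hev2 : ∀ᶠ τ in nhdsWithin (0:ℝ) (Set.Ioi 0), L τ ∈ O :=
      mem_nhdsWithin_of_mem_nhds (hLt.eventually (hO.eventually_mem hzO))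
    have hev3 : ∀ᶠ τ in nhdsWithin (0:ℝ) (Set.Ioi 0), g (L τ) ≤ g z :=
      mem_nhdsWithin_of_mem_nhds (hLt.eventually hloc)
    obtain ⟨δ, hδ0, hδ⟩ := mem_nhdsGT_iff_exists_Ioo_subset.mp
      ((hev1'.and (hev2.and hev3)) : _)
    have hδpos : 0 < δ := hδ0
    have hmono : StrictMonoOn ψ (Set.Icc 0 (δ/2)) := by
      apply strictMonoOn_of_deriv_pos (convex_Icc _ _)
      · intro τ hτ
        have hca : ContinuousAt ψ τ := by
          rcases eq_or_lt_of_le hτ.1 with h0 | h0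
          · rw [← h0]
            exact (hψ 0 (by rw [hL0]; exact hzO)).continuousAt
          · have hτδ : τ ∈ Set.Ioo 0 δ := ⟨h0, lt_of_le_of_lt hτ.2 (by linarith)⟩
            exact (hψ τ (hδ hτδ).2.1).continuousAt
        exact hca.continuousWithinAt
      · intro τ hτ
        rw [interior_Icc] at hτ
        have hτδ : τ ∈ Set.Ioo 0 δ := ⟨hτ.1, lt_trans hτ.2 (by linarith)⟩
        have hsl := (hδ hτδ).1
        rw [slope_def_field, hφ0, sub_zero, sub_zero] at hsl
        have hφτ : 0 < φ τ := by
          have := mul_pos hsl hτ.1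
          rwa [div_mul_cancel₀] at this
          exact ne_of_gt hτ.1
        rw [(hψ τ (hδ hτδ).2.1).deriv]
        exact hφτ
    have hlt : ψ 0 < ψ (δ/2) := hmono (Set.left_mem_Icc.mpr (by linarith))
      (Set.right_mem_Icc.mpr (by linarith)) (by linarith)
    have hle : ψ (δ/2) ≤ g z := (hδ ⟨by linarith, by linarith⟩).2.2
    have hψ0 : ψ 0 = g z := by rw [hψdef]; simp [hL0]
    linarith
  · have hzf : z ∈ frontier O := by
      rw [hO.frontier_eq]
      exact ⟨hz, hzO⟩
    exact le_trans (hmax (subset_closure hx)) (hfr z hzf)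

end StmtSeven

open StmtSeven in
set_option maxHeartbeats 3200000 in
/-- Uniform bound on domains contained in a half-space: a subsolution of
`-Δu ≤ f(u)` with `f ≤ 0` on `[ζ,∞)`, `u ≤ 0` on `∂Ω` and sublinear growth of
`u⁺` satisfies `u ≤ ζ` in `Ω`. -/
theorem stmt_7 (N : ℕ) (hN : 2 ≤ N) (α : ℝ) (hα : α ∈ Set.Ico (0:ℝ) 1)
    (Ω : Set (Euc N)) (hΩo : IsOpen Ω) (hΩc : IsConnected Ω)
    (hΩu : ¬ Bornology.IsBounded Ω)
    -- Ω is contained in an open affine half-space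
    (ν : Euc N) (c : ℝ) (hν : ‖ν‖ = 1)
    (hhalf : Ω ⊆ {x : Euc N | c < (inner ℝ x ν : ℝ)})
    (f : ℝ → ℝ) (hf : Continuous f)
    (ζ : ℝ) (hζ : 0 < ζ) (hfneg : ∀ t ≥ ζ, f t ≤ 0)
    (u : Euc N → ℝ)
    -- u ∈ C⁰(closure Ω) ∩ C²(Ω)
    (hu0 : ContinuousOn u (closure Ω))
    (hu2 : ContDiffOn ℝ 2 u Ω)
    (heq : ∀ x ∈ Ω, -lap u x ≤ f (u x))
    (hbd : ∀ x ∈ frontier Ω, u x ≤ 0)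
    -- u⁺(x) = O(|x|^α) as |x| → ∞
    (hgrow : ∃ A B : ℝ, ∀ x ∈ Ω, max (u x) 0 ≤ A + B * ‖x‖ ^ α) :
    ∀ x ∈ Ω, u x ≤ ζ := by
  obtain ⟨A, B, hAB⟩ := hgrow
  intro x₀ hx₀
  by_contra hgt
  push_neg at hgt
  -- basic geometric facts
  have hνν : (inner ℝ ν ν : ℝ) = 1 := by
    rw [real_inner_self_eq_norm_sq, hν]; norm_num
  have hts : ∀ x : Euc N, (inner ℝ x ν : ℝ) - c ≤ ‖x - c • ν‖ := by
    intro x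
    have h1 : (inner ℝ x ν : ℝ) - c = (inner ℝ (x - c • ν) ν : ℝ) := by
      rw [inner_sub_left, real_inner_smul_left, hνν]; ring
    rw [h1]
    calc (inner ℝ (x - c • ν) ν : ℝ) ≤ ‖x - c • ν‖ * ‖ν‖ := real_inner_le_norm _ _
      _ = ‖x - c • ν‖ := by rw [hν, mul_one]
  have hclht : closure Ω ⊆ {x : Euc N | c ≤ (inner ℝ x ν : ℝ)} := by
    exact closure_minimal (fun x hx => show c ≤ (inner ℝ x ν : ℝ) from le_of_lt (hhalf hx))
      (isClosed_le continuous_const (Continuous.inner continuous_id continuous_const))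
  have hqnorm : ∀ x : Euc N, ‖x - c • ν‖^2 = (inner ℝ x x : ℝ) - 2*c*(inner ℝ x ν : ℝ) + c^2 := by
    intro x
    rw [norm_sub_sq_real, real_inner_smul_right, norm_smul, hν,
      ← real_inner_self_eq_norm_sq]
    simp [sq_abs]
    ring
  set r₀ : ℝ := ‖x₀ - c • ν‖ with hr₀
  set t₀ : ℝ := (inner ℝ x₀ ν : ℝ) - c with ht₀
  have ht₀pos : 0 < t₀ := by
    have h := hhalf hx₀
    simp only [Set.mem_setOf_eq] at h
    rw [ht₀]
    linarith
  have ht₀r₀ : t₀ ≤ r₀ := hts x₀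
  have hr₀nn : 0 ≤ r₀ := norm_nonneg _
  -- the set where u is continuous and > ζ
  set S1 : Set (Euc N) := Ω ∩ u ⁻¹' (Set.Ioi ζ) with hS1
  have hS1o : IsOpen S1 := by
    have : ContinuousOn u Ω := hu0.mono subset_closure
    simpa [hS1, Set.inter_comm] using this.isOpen_inter_preimage hΩo isOpen_Ioi
  have hS1Ω : S1 ⊆ Ω := Set.inter_subset_left
  -- the key quantitative estimate
  have key : ∀ R : ℝ, r₀ + 1 ≤ R →
      u x₀ - ζ ≤ ((abs A) + (abs B)*(R+(abs c))^α) * ((N:ℝ)*t₀/R + r₀^2/R^2) := by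
    intro R hRlb
    have hR1 : (1:ℝ) ≤ R := by linarith
    have hRpos : (0:ℝ) < R := by linarith
    have hR2pos : (0:ℝ) < R^2 := by positivity
    set M : ℝ := (abs A) + (abs B)*(R+(abs c))^α with hM
    have hMnn : 0 ≤ M := by
      have : (0:ℝ) ≤ (R+(abs c))^α := Real.rpow_nonneg (by positivity) α
      have := mul_nonneg (abs_nonneg B) this
      simp only [hM]
      linarith [abs_nonneg A]
    apply le_of_forall_sub_le
    intro ε' hε'
    set ε : ℝ := ε'/R^2 with hεdef
    have hεpos : 0 < ε := div_pos hε' hR2pos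
    have hεR2 : ε * R^2 = ε' := by
      rw [hεdef]; field_simp
    -- the barrier in normal form
    set a : ℝ := M/R^2 - ε with ha
    set bb : ℝ := -(M*(N:ℝ))/R^2 with hbb
    set k : ℝ := M*(N:ℝ)/R + 2*c*((N:ℝ)-1)*M/R^2 + 2*ε*c with hk
    set k₀ : ℝ := -(M*(N:ℝ)*c)/R + (1-(N:ℝ))*c^2*M/R^2 - ε*c^2 + ζ with hk₀
    set G : Euc N → ℝ := fun x => a * (inner ℝ x x : ℝ)
        + bb * ((inner ℝ ν x : ℝ) * (inner ℝ ν x : ℝ)) + k * (inner ℝ ν x : ℝ) + k₀ with hG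
    have hGq : ContDiff ℝ 2 G := by
      have h1 : ContDiff ℝ 2 (fun x : Euc N => (inner ℝ x x : ℝ)) :=
        contDiff_id.inner ℝ contDiff_id
      have h2 : ContDiff ℝ 2 (fun x : Euc N => (inner ℝ ν x : ℝ)) :=
        contDiff_const.inner ℝ contDiff_id
      exact (((contDiff_const.mul h1).add (contDiff_const.mul (h2.mul h2))).add
        (contDiff_const.mul h2)).add contDiff_const
    have hRne : R ≠ 0 := ne_of_gt hRpos
    have hGval : ∀ x : Euc N, G x = ζ + M*((N:ℝ)*((inner ℝ x ν : ℝ)-c)/R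
        + (‖x - c • ν‖^2 - (N:ℝ)*((inner ℝ x ν : ℝ)-c)^2)/R^2) - ε*‖x - c • ν‖^2 := by
      intro x
      simp only [hG]
      rw [hqnorm x, real_inner_comm ν x, ha, hbb, hk, hk₀]
      field_simp
      ring
    -- the comparison region
    set O : Set (Euc N) := S1 ∩ Metric.ball (c • ν) R with hO
    have hOopen : IsOpen O := hS1o.inter Metric.isOpen_ball
    have hObdd : Bornology.IsBounded O :=
      (Metric.isBounded_ball).subset Set.inter_subset_right
    have hOΩ : O ⊆ Ω := fun y hy => hS1Ω hy.1
    have hOcl : closure O ⊆ closure Ω := closure_mono hOΩ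
    set g : Euc N → ℝ := fun y => u y - G y with hg
    have hgc : ContinuousOn g (closure O) :=
      (hu0.mono hOcl).sub (hGq.continuous.continuousOn)
    have hg2 : ∀ x ∈ O, ContDiffAt ℝ 2 g x := fun x hx =>
      (hu2.contDiffAt (hΩo.mem_nhds (hOΩ hx))).sub hGq.contDiffAt
    have hlapG : ∀ x : Euc N, lap G x = -(2*(N:ℝ)*ε) := by
      intro x
      rw [hG]
      rw [lap_quad a bb k k₀ ν x, hνν]
      rw [ha, hbb]
      field_simp
      ring
    have hsub : ∀ x ∈ O, 0 < lap g x := by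
      intro x hx
      have hxΩ : x ∈ Ω := hOΩ hx
      have hxu : ζ < u x := hx.1.2
      have hlapu : 0 ≤ lap u x := by
        have h1 := heq x hxΩ
        have h2 := hfneg (u x) (le_of_lt hxu)
        linarith
      have : lap g x = lap u x - lap G x :=
        lap_sub (hu2.contDiffAt (hΩo.mem_nhds hxΩ)) hGq
      rw [this, hlapG]
      have hNpos : (0:ℝ) < (N:ℝ) := by
        have : (2:ℝ) ≤ (N:ℝ) := by exact_mod_cast hN
        linarith
      have h2Nε : 0 < 2*(N:ℝ)*ε := by
        have := mul_pos hNpos hεpos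
        linarith
      linarith
    -- boundary estimate
    have hfr : ∀ y ∈ frontier O, g y ≤ ε * R^2 := by
      intro y hy
      have hyncl : y ∈ closure O := frontier_subset_closure hy
      have hynO : y ∉ O := by
        rw [hOopen.frontier_eq] at hy
        exact hy.2
      have hyS1 : y ∈ closure S1 := closure_mono Set.inter_subset_left hyncl
      have hyΩc : y ∈ closure Ω := hOcl hyncl
      have hyB : ‖y - c • ν‖ ≤ R := by
        have h1 : y ∈ closure (Metric.ball (c • ν) R) :=
          closure_mono Set.inter_subset_right hyncl
        rw [closure_ball _ (ne_of_gt hRpos)] at h1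
        rwa [Metric.mem_closedBall, dist_eq_norm] at h1
      have htynn : 0 ≤ (inner ℝ y ν : ℝ) - c := by
        have h := hclht hyΩc
        simp only [Set.mem_setOf_eq] at h
        linarith
      have htyry : (inner ℝ y ν : ℝ) - c ≤ ‖y - c • ν‖ := hts y
      have hrynn : (0:ℝ) ≤ ‖y - c • ν‖ := norm_nonneg _
      have htyR : (inner ℝ y ν : ℝ) - c ≤ R := le_trans htyry hyB
      have hyuζ : ζ ≤ u y := by
        have hcw : ContinuousWithinAt u S1 y :=
          (hu0 y hyΩc).mono (subset_trans hS1Ω subset_closure)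
        have hnb : (nhdsWithin y S1).NeBot := mem_closure_iff_nhdsWithin_neBot.mp hyS1
        exact ge_of_tendsto hcw
          (eventually_nhdsWithin_of_forall (fun z hz => le_of_lt hz.2))
      have hWnn : 0 ≤ (N:ℝ)*((inner ℝ y ν : ℝ) - c)/R
          + (‖y - c • ν‖^2 - (N:ℝ)*((inner ℝ y ν : ℝ) - c)^2)/R^2 := by
        have he0 : (N:ℝ)*((inner ℝ y ν : ℝ) - c)/R
            + (‖y - c • ν‖^2 - (N:ℝ)*((inner ℝ y ν : ℝ) - c)^2)/R^2
            = ((N:ℝ)*((inner ℝ y ν : ℝ) - c)*(R-((inner ℝ y ν : ℝ) - c)) + ‖y - c • ν‖^2)/R^2 := by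
          field_simp
          ring
        rw [he0]
        apply div_nonneg _ (le_of_lt hR2pos)
        have h1 : 0 ≤ (N:ℝ)*((inner ℝ y ν : ℝ) - c) := mul_nonneg (Nat.cast_nonneg N) htynn
        nlinarith
      have hεry : ε*‖y - c • ν‖^2 ≤ ε*R^2 := by
        apply mul_le_mul_of_nonneg_left _ (le_of_lt hεpos)
        nlinarith
      show u y - G y ≤ ε * R^2
      rw [hGval y]
      rcases em (y ∈ Ω) with hyΩ | hyΩ
      · by_cases hyu : u y ≤ ζ
        · have hMW : 0 ≤ M * ((N:ℝ)*((inner ℝ y ν : ℝ) - c)/R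
              + (‖y - c • ν‖^2 - (N:ℝ)*((inner ℝ y ν : ℝ) - c)^2)/R^2) := mul_nonneg hMnn hWnn
          linarith
        · push_neg at hyu
          have hyS1' : y ∈ S1 := ⟨hyΩ, hyu⟩
          have hynB : ¬ (y ∈ Metric.ball (c • ν) R) := fun hmem => hynO ⟨hyS1', hmem⟩
          have hyR : ‖y - c • ν‖ = R := by
            apply le_antisymm hyB
            rw [Metric.mem_ball, dist_eq_norm] at hynB
            push_neg at hynB
            exact hynB
          have hynorm : ‖y‖ ≤ R + (abs c) := by
            have h1 : ‖y‖ = ‖(y - c • ν) + c • ν‖ := by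
              congr 1
              abel
            rw [h1]
            calc ‖(y - c • ν) + c • ν‖ ≤ ‖y - c • ν‖ + ‖c • ν‖ := norm_add_le _ _
              _ ≤ R + (abs c) := by
                  rw [norm_smul, hν, mul_one]
                  exact add_le_add hyB le_rfl
          have hrpow : ‖y‖^α ≤ (R+(abs c))^α :=
            Real.rpow_le_rpow (norm_nonneg y) hynorm hα.1
          have hrnn : (0:ℝ) ≤ ‖y‖^α := Real.rpow_nonneg (norm_nonneg y) α
          have huM : u y ≤ M := by
            calc u y ≤ max (u y) 0 := le_max_left _ _
              _ ≤ A + B * ‖y‖^α := hAB y hyΩ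
              _ ≤ (abs A) + (abs B) * (R+(abs c))^α := by
                  have h1 : A ≤ (abs A) := le_abs_self A
                  have h2 : B * ‖y‖^α ≤ (abs B) * ‖y‖^α :=
                    mul_le_mul_of_nonneg_right (le_abs_self B) hrnn
                  have h3 : (abs B) * ‖y‖^α ≤ (abs B) * (R+(abs c))^α :=
                    mul_le_mul_of_nonneg_left hrpow (abs_nonneg B)
                  linarith
              _ = M := hM.symm
          rw [hyR]
          have hW1 : 1 ≤ (N:ℝ)*((inner ℝ y ν : ℝ) - c)/R
              + (R^2 - (N:ℝ)*((inner ℝ y ν : ℝ) - c)^2)/R^2 := by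
            have he1 : (N:ℝ)*((inner ℝ y ν : ℝ) - c)/R
                + (R^2 - (N:ℝ)*((inner ℝ y ν : ℝ) - c)^2)/R^2
                = 1 + ((N:ℝ)*((inner ℝ y ν : ℝ) - c)*(R-((inner ℝ y ν : ℝ) - c)))/R^2 := by
              field_simp
              ring
            rw [he1]
            have h1 : 0 ≤ (N:ℝ)*((inner ℝ y ν : ℝ) - c)*(R-((inner ℝ y ν : ℝ) - c)) :=
              mul_nonneg (mul_nonneg (Nat.cast_nonneg N) htynn) (by linarith)
            have := div_nonneg h1 (le_of_lt hR2pos)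
            linarith
          have hMW : M ≤ M * ((N:ℝ)*((inner ℝ y ν : ℝ) - c)/R
              + (R^2 - (N:ℝ)*((inner ℝ y ν : ℝ) - c)^2)/R^2) :=
            le_mul_of_one_le_right hMnn hW1
          linarith
      · exfalso
        have hyfr : y ∈ frontier Ω := by
          rw [hΩo.frontier_eq]
          exact ⟨hyΩc, hyΩ⟩
        linarith [hbd y hyfr]
    -- apply the maximum principle
    have hx₀O : x₀ ∈ O := by
      refine ⟨⟨hx₀, hgt⟩, ?_⟩
      rw [Metric.mem_ball, dist_eq_norm]
      simp only [← hr₀]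
      linarith
    have hmain := maxp hOopen hObdd hgc hg2 hsub hfr x₀ hx₀O
    have hmain' : u x₀ - G x₀ ≤ ε * R^2 := hmain
    rw [hGval x₀] at hmain'
    have hWub : M*((N:ℝ)*((inner ℝ x₀ ν : ℝ)-c)/R + (‖x₀ - c • ν‖^2 - (N:ℝ)*((inner ℝ x₀ ν : ℝ)-c)^2)/R^2)
        ≤ M*((N:ℝ)*t₀/R + r₀^2/R^2) := by
      rw [← ht₀, ← hr₀]
      apply mul_le_mul_of_nonneg_left _ hMnn
      have h0 : (r₀^2 - (N:ℝ)*t₀^2) ≤ r₀^2 := by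
        have : (0:ℝ) ≤ (N:ℝ)*t₀^2 := by positivity
        linarith
      have h1 : (r₀^2 - (N:ℝ)*t₀^2)/R^2 ≤ r₀^2/R^2 := (div_le_div_iff_of_pos_right hR2pos).mpr h0
      linarith
    have hq0 : 0 ≤ ε*‖x₀ - c • ν‖^2 := by positivity
    rw [← hεR2]
    linarith
  -- pass to the limit R → ∞
  set Φ : ℝ → ℝ := fun R => ((abs A) + (abs B)*(R+(abs c))^α) * ((N:ℝ)*t₀/R + r₀^2/R^2) with hΦ
  have hev : ∀ᶠ R in atTop, u x₀ - ζ ≤ Φ R :=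
    eventually_atTop.mpr ⟨r₀ + 1, fun R hR => key R hR⟩
  have hK : Tendsto Φ atTop (nhds 0) := by
    have h0 : ∀ᶠ R in atTop, 0 ≤ Φ R := by
      filter_upwards [eventually_ge_atTop (1:ℝ)] with R hR
      have hRpos : (0:ℝ) < R := by linarith
      have h1 : (0:ℝ) ≤ (abs A) + (abs B)*(R+(abs c))^α := by
        have := mul_nonneg (abs_nonneg B)
          (Real.rpow_nonneg (by linarith [abs_nonneg c] : (0:ℝ) ≤ R + abs c) α)
        linarith [abs_nonneg A]
      have h2 : (0:ℝ) ≤ (N:ℝ)*t₀/R + r₀^2/R^2 := by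
        have ha1 : (0:ℝ) ≤ (N:ℝ)*t₀/R :=
          div_nonneg (mul_nonneg (Nat.cast_nonneg N) (le_of_lt ht₀pos)) (le_of_lt hRpos)
        have ha2 : (0:ℝ) ≤ r₀^2/R^2 := div_nonneg (sq_nonneg r₀) (sq_nonneg R)
        linarith
      exact mul_nonneg h1 h2
    have hle : ∀ᶠ R in atTop, Φ R ≤ (((abs A)+2*(abs B))*((N:ℝ)*t₀+r₀^2)) * R^(α-(1:ℝ)) := by
      filter_upwards [eventually_ge_atTop (max 1 (abs c))] with R hR
      have hR1 : (1:ℝ) ≤ R := le_trans (le_max_left _ _) hR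
      have hRc : (abs c) ≤ R := le_trans (le_max_right _ _) hR
      have hRpos : (0:ℝ) < R := by linarith
      have hRα1 : (1:ℝ) ≤ R^α := by
        have := Real.rpow_le_rpow zero_le_one hR1 hα.1
        rwa [Real.one_rpow] at this
      have hRαnn : (0:ℝ) ≤ R^α := by linarith
      have h2α : (R+(abs c))^α ≤ 2*R^α := by
        calc (R+(abs c))^α ≤ (2*R)^α :=
              Real.rpow_le_rpow (by positivity) (by linarith) hα.1
          _ = 2^α * R^α := Real.mul_rpow (by norm_num) (le_of_lt hRpos)
          _ ≤ 2 * R^α := by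
              have h21 : (2:ℝ)^α ≤ 2^(1:ℝ) :=
                Real.rpow_le_rpow_of_exponent_le one_le_two (le_of_lt hα.2)
              rw [Real.rpow_one] at h21
              exact mul_le_mul_of_nonneg_right h21 hRαnn
      have hMle : (abs A) + (abs B)*(R+(abs c))^α ≤ ((abs A)+2*(abs B))*R^α := by
        have hA : (abs A) ≤ (abs A) * R^α := le_mul_of_one_le_right (abs_nonneg A) hRα1
        have hB : (abs B)*(R+(abs c))^α ≤ (abs B)*(2*R^α) :=
          mul_le_mul_of_nonneg_left h2α (abs_nonneg B)
        nlinarith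
      have hWle : (N:ℝ)*t₀/R + r₀^2/R^2 ≤ ((N:ℝ)*t₀+r₀^2)/R := by
        have h1 : r₀^2/R^2 ≤ r₀^2/R := by
          apply div_le_div_of_nonneg_left (sq_nonneg r₀) hRpos
          nlinarith
        have h2 := add_div ((N:ℝ)*t₀) (r₀^2) R
        linarith
      have hWnn : (0:ℝ) ≤ (N:ℝ)*t₀/R + r₀^2/R^2 := by positivity
      have hMnn' : (0:ℝ) ≤ ((abs A)+2*(abs B))*R^α := by positivity
      calc Φ R ≤ (((abs A)+2*(abs B))*R^α) * (((N:ℝ)*t₀+r₀^2)/R) := by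
            apply mul_le_mul hMle hWle hWnn hMnn'
        _ = (((abs A)+2*(abs B))*((N:ℝ)*t₀+r₀^2)) * R^(α-(1:ℝ)) := by
            rw [Real.rpow_sub hRpos, Real.rpow_one]
            ring
    have htend : Tendsto (fun R : ℝ => (((abs A)+2*(abs B))*((N:ℝ)*t₀+r₀^2)) * R^(α-(1:ℝ)))
        atTop (nhds 0) := by
      have h := tendsto_rpow_neg_atTop (y := 1-α) (by linarith [hα.2])
      have heq' : (fun R : ℝ => R^(α-(1:ℝ))) = fun R : ℝ => R^(-(1-α)) := by
        funext R; ring_nf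
      have := h.const_mul (((abs A)+2*(abs B))*((N:ℝ)*t₀+r₀^2))
      rw [mul_zero] at this
      simpa [heq'] using this
    exact tendsto_of_tendsto_of_tendsto_of_le_of_le' tendsto_const_nhds htend h0 hle
  have : u x₀ - ζ ≤ 0 := ge_of_tendsto hK hev
  linarith

end
end

section
/- Let $N \geq 2$, $\alpha \in (0,1]$, $r > 0$, and let $g \in C^1(\mathbb{R}^{N-1})$ with $\nabla g$ locally $\alpha$-Hölder continuous; let $\Omega = \{(x', x_N) : x_N > g(x')\}$ and $\Omega_r = \Omega \cap (B'(0', r) \times \mathbb{R})$. Then for any $v \in C^{1,\alpha}(\overline{\Omega_r})$ there exists an extension $\widetilde{w} \in C^{1,\alpha}(\overline{B'(0',r) \times \mathbb{R}})$ with $\widetilde{w} = v$ on $\overline{\Omega_r}$ and $\|\widetilde{w}\|_{C^{1,\alpha}(\overline{B'(0',r) \times \mathbb{R}})} \leq C (1 + \|\nabla g\|_{C^{0,\alpha}(\overline{B'(0',r)})})^4 \|v\|_{C^{1,\alpha}(\overline{\Omega_r})}$, where $C = C(N) > 0$. -/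
open MeasureTheory Metric Set Real Filter ENNReal

noncomputable section

/-- Projection onto the first `n` coordinates. -/
def proj {n : ℕ} (x : Euc (n + 1)) : Euc n := WithLp.toLp 2 (fun i : Fin n => x i.castSucc)

/-- The point of `ℝ^{n+1}` with horizontal part `x'` and last coordinate `t`. -/
def emb {n : ℕ} (x' : Euc n) (t : ℝ) : Euc (n + 1) :=
  WithLp.toLp 2 (fun i : Fin (n + 1) => (Fin.lastCases (motive := fun _ => ℝ) t (fun j => x' j) i : ℝ))

/-- The epigraph of `g : ℝⁿ → ℝ` in `ℝ^{n+1}`. -/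
def epigraph {n : ℕ} (g : Euc n → ℝ) : Set (Euc (n + 1)) :=
  {x | g (proj x) < x (Fin.last n)}

/-- The outward unit normal to the boundary of the epigraph of a `C¹` function
`g`, namely `(∇g(x'), -1)/√(1+|∇g(x')|²)`. -/
noncomputable def epiNormal {n : ℕ} (g : Euc n → ℝ) (p : Euc (n + 1)) : Euc (n + 1) :=
  (Real.sqrt (1 + ‖gradient g (proj p)‖ ^ 2))⁻¹ • emb (gradient g (proj p)) (-1)

/-- The open vertical cylinder `B'(0,r) × ℝ` in `ℝ^{n+1}`. -/
def cyl {n : ℕ} (r : ℝ) : Set (Euc (n + 1)) := {x | proj x ∈ ball (0 : Euc n) r}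

variable {n : ℕ}

noncomputable def projL (n : ℕ) : Euc (n+1) →L[ℝ] Euc n :=
  (EuclideanSpace.equiv (Fin n) ℝ).symm.toContinuousLinearMap.comp
    (ContinuousLinearMap.pi fun i : Fin n => EuclideanSpace.proj (i.castSucc))

lemma projL_apply (x : Euc (n+1)) : projL n x = proj x := by ext i; simp [projL, proj]

noncomputable def embL (n : ℕ) : Euc n →L[ℝ] Euc (n+1) :=
  (EuclideanSpace.equiv (Fin (n+1)) ℝ).symm.toContinuousLinearMap.comp
    (ContinuousLinearMap.pi fun i : Fin (n+1) =>
      Fin.lastCases (0 : Euc n →L[ℝ] ℝ) (fun j => EuclideanSpace.proj j) i)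

lemma embL_apply (u : Euc n) : embL n u = emb u 0 := by
  ext i
  induction i using Fin.lastCases with
  | last => simp [embL, emb, Fin.lastCases_last]  -- ?
  | cast j => simp [embL, emb, Fin.lastCases_castSucc]

def eN (n : ℕ) : Euc (n+1) := EuclideanSpace.single (Fin.last n) 1

lemma emb_eq (u : Euc n) (t : ℝ) : emb u t = embL n u + t • eN n := by
  ext i
  induction i using Fin.lastCases with
  | last => simp [embL_apply, emb, eN, Fin.lastCases_last, EuclideanSpace.single_apply]
  | cast j => simp [embL_apply, emb, eN, Fin.lastCases_castSucc, EuclideanSpace.single_apply,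
      (Fin.castSucc_lt_last j).ne]

lemma proj_emb (u : Euc n) (t : ℝ) : proj (emb u t) = u := by
  ext j; simp [proj, emb]

lemma emb_last (u : Euc n) (t : ℝ) : emb u t (Fin.last n) = t := by simp [emb]

lemma emb_proj (x : Euc (n+1)) : emb (proj x) (x (Fin.last n)) = x := by
  ext i
  induction i using Fin.lastCases with
  | last => simp [emb]
  | cast j => simp [emb, proj]

lemma inner_emb (u : Euc n) (t : ℝ) (h : Euc (n+1)) :
    inner ℝ (emb u t) h = (inner ℝ u (proj h) : ℝ) + t * h (Fin.last n) := by
  simp only [PiLp.inner_apply, RCLike.inner_apply, conj_trivial]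
  rw [Fin.sum_univ_castSucc]
  simp [emb, proj]
  ring

lemma norm_sq_eq (x : Euc (n+1)) : ‖x‖^2 = ‖proj x‖^2 + (x (Fin.last n))^2 := by
  have h1 : ‖x‖^2 = ∑ i, (x i)^2 := by
    rw [EuclideanSpace.norm_eq]; rw [Real.sq_sqrt (by positivity)]
    congr 1; ext i; rw [Real.norm_eq_abs, sq_abs]
  have h2 : ‖proj x‖^2 = ∑ j, (proj x j)^2 := by
    rw [EuclideanSpace.norm_eq]; rw [Real.sq_sqrt (by positivity)]
    congr 1; ext i; rw [Real.norm_eq_abs, sq_abs]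
  rw [h1, h2, Fin.sum_univ_castSucc]; simp [proj]

lemma norm_proj_le (x : Euc (n+1)) : ‖proj x‖ ≤ ‖x‖ := by
  have := norm_sq_eq x
  nlinarith [norm_nonneg (proj x), norm_nonneg x, sq_nonneg (x (Fin.last n))]

lemma abs_last_le (x : Euc (n+1)) : |x (Fin.last n)| ≤ ‖x‖ := by
  have := norm_sq_eq x
  have h := abs_nonneg (x (Fin.last n))
  nlinarith [norm_nonneg (proj x), norm_nonneg x, sq_abs (x (Fin.last n))]

lemma norm_emb_le (u : Euc n) (t : ℝ) : ‖emb u t‖ ≤ ‖u‖ + |t| := by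
  have := norm_sq_eq (emb u t)
  rw [proj_emb, emb_last] at this
  nlinarith [norm_nonneg (emb u t), norm_nonneg u, abs_nonneg t, sq_abs t]

lemma proj_sub (x y : Euc (n+1)) : proj (x - y) = proj x - proj y := by ext i; simp [proj]
lemma last_sub (x y : Euc (n+1)) : (x - y) (Fin.last n) = x (Fin.last n) - y (Fin.last n) := rfl

lemma projL_surj : Function.Surjective (projL n) := fun u =>
  ⟨emb u 0, by rw [projL_apply, proj_emb]⟩

lemma closure_cyl {r : ℝ} (hr : 0 < r) :
    closure (cyl (n := n) r) = {x | proj x ∈ closedBall (0 : Euc n) r} := by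
  have hcont : Continuous (proj : Euc (n+1) → Euc n) := by
    have := (projL n).continuous
    simpa [funext fun x => projL_apply (n := n) x] using this
  apply Subset.antisymm
  · have : cyl (n := n) r ⊆ {x | proj x ∈ closedBall (0 : Euc n) r} := fun x hx =>
      ball_subset_closedBall hx
    refine closure_minimal this ?_
    exact IsClosed.preimage hcont isClosed_closedBall
  · have hopen : IsOpenMap (projL n) := (projL n).isOpenMap projL_surj
    intro x hx
    have : x ∈ projL n ⁻¹' closure (ball (0 : Euc n) r) := by
      rw [closure_ball _ hr.ne']
      simpa [projL_apply] using hx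
    have h2 := hopen.preimage_closure_subset_closure_preimage this
    have : projL n ⁻¹' ball (0 : Euc n) r = cyl r := by
      ext y; simp [cyl, projL_apply]
    rwa [this] at h2

lemma continuous_proj : Continuous (proj : Euc (n+1) → Euc n) := by
  have := (projL n).continuous
  simpa [funext fun x => projL_apply (n := n) x] using this

lemma continuous_last : Continuous (fun x : Euc (n+1) => x (Fin.last n)) :=
  (EuclideanSpace.proj (Fin.last n)).continuous

lemma closure_epi_cyl {r : ℝ} (hr : 0 < r) {g : Euc n → ℝ} (hg : Continuous g) :
    closure (epigraph g ∩ cyl r) =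
      {x : Euc (n+1) | proj x ∈ closedBall (0 : Euc n) r ∧ g (proj x) ≤ x (Fin.last n)} := by
  apply Subset.antisymm
  · refine closure_minimal ?_ ?_
    · rintro x ⟨h1, h2⟩
      exact ⟨ball_subset_closedBall h2, le_of_lt h1⟩
    · exact IsClosed.inter (IsClosed.preimage continuous_proj isClosed_closedBall)
        (isClosed_le (hg.comp continuous_proj) continuous_last)
  · rintro x ⟨hx1, hx2⟩
    -- approximating sequence
    set u : ℕ → Euc n := fun k => (1 - 1/(k+1) : ℝ) • proj x with hu
    set t : ℕ → ℝ := fun k => max (x (Fin.last n)) (g (u k)) + 1/(k+1) with ht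
    have hulim : Tendsto u atTop (nhds (proj x)) := by
      have : Tendsto (fun k : ℕ => (1 - 1/(k+1) : ℝ)) atTop (nhds 1) := by
        have := tendsto_one_div_add_atTop_nhds_zero_nat (𝕜 := ℝ)
        simpa using (tendsto_const_nhds (x := (1:ℝ))).sub this
      rw [hu]
      simpa using this.smul (tendsto_const_nhds (x := proj x))
    have htlim : Tendsto t atTop (nhds (x (Fin.last n))) := by
      have h1 : Tendsto (fun k => g (u k)) atTop (nhds (g (proj x))) :=
        (hg.continuousAt).tendsto.comp hulim
      have h2 : Tendsto (fun k => max (x (Fin.last n)) (g (u k))) atTop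
          (nhds (max (x (Fin.last n)) (g (proj x)))) :=
        (tendsto_const_nhds.max h1)
      rw [max_eq_left hx2] at h2
      have h3 := h2.add tendsto_one_div_add_atTop_nhds_zero_nat
      simp only [add_zero] at h3
      exact h3
    have hlim : Tendsto (fun k => emb (u k) (t k)) atTop (nhds x) := by
      have : Tendsto (fun k => embL n (u k) + (t k) • eN n) atTop
          (nhds (embL n (proj x) + (x (Fin.last n)) • eN n)) :=
        (((embL n).continuous.tendsto _).comp hulim).add (htlim.smul tendsto_const_nhds)
      rw [← emb_eq, emb_proj] at this
      simpa [funext fun k => emb_eq (u k) (t k)] using this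
    refine mem_closure_of_tendsto hlim (Eventually.of_forall fun k => ⟨?_, ?_⟩)
    · show g (proj (emb (u k) (t k))) < (emb (u k) (t k)) (Fin.last n)
      rw [proj_emb, emb_last]
      have : g (u k) ≤ max (x (Fin.last n)) (g (u k)) := le_max_right _ _
      have hk : (0:ℝ) < 1/(k+1) := by positivity
      simp only [ht]; linarith
    · show proj (emb (u k) (t k)) ∈ ball (0 : Euc n) r
      rw [proj_emb]
      simp only [mem_ball, dist_zero_right, hu, norm_smul]
      have h01 : (0:ℝ) ≤ 1 - 1/(k+1) := by
        have : (1:ℝ)/(k+1) ≤ 1 := by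
          rw [div_le_one (by positivity)]; linarith [Nat.cast_nonneg (α := ℝ) k]
        linarith
      have hlt : (1 - 1/(k+1) : ℝ) < 1 := by
        have : (0:ℝ) < 1/(k+1) := by positivity
        linarith
      have hxr : ‖proj x‖ ≤ r := by simpa [mem_closedBall, dist_zero_right] using hx1
      calc |1 - 1/(k+1:ℝ)| * ‖proj x‖ ≤ (1 - 1/(k+1:ℝ)) * r := by
            rw [abs_of_nonneg h01]
            exact mul_le_mul_of_nonneg_left hxr h01 |>.trans (le_refl _) |>.trans
              (by nlinarith [norm_nonneg (proj x)])
        _ < r := by nlinarith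

lemma toDual_gradient' (g : Euc n → ℝ) (x : Euc n) :
    InnerProductSpace.toDual ℝ (Euc n) (gradient g x) = fderiv ℝ g x :=
  (InnerProductSpace.toDual ℝ (Euc n)).apply_symm_apply _

lemma fderiv_apply_eq_inner (g : Euc n → ℝ) (x h : Euc n) :
    fderiv ℝ g x h = inner ℝ (gradient g x) h := by
  rw [← toDual_gradient]; rfl

lemma norm_fderiv_eq (g : Euc n → ℝ) (x : Euc n) :
    ‖fderiv ℝ g x‖ = ‖gradient g x‖ := by
  rw [← toDual_gradient]
  exact (InnerProductSpace.toDual ℝ (Euc n)).norm_map _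

lemma g_lip {g : Euc n → ℝ} (hg : ContDiff ℝ 1 g) {G r : ℝ}
    (hG : ∀ x ∈ closedBall (0 : Euc n) r, ‖gradient g x‖ ≤ G)
    {x y : Euc n} (hx : x ∈ closedBall (0 : Euc n) r) (hy : y ∈ closedBall (0 : Euc n) r) :
    |g x - g y| ≤ G * ‖x - y‖ := by
  have := (convex_closedBall (0 : Euc n) r).norm_image_sub_le_of_norm_fderiv_le
    (f := g) (C := G)
    (fun z _ => (hg.differentiable one_ne_zero).differentiableAt)
    (fun z hz => by rw [norm_fderiv_eq]; exact hG z hz) hy hx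
  simpa [Real.norm_eq_abs] using this

noncomputable def lastC (n : ℕ) : Euc (n+1) →L[ℝ] ℝ := EuclideanSpace.proj (Fin.last n)

/-- reflection map -/
def reflMap (g : Euc n → ℝ) (a : ℝ) (x : Euc (n+1)) : Euc (n+1) :=
  emb (proj x) ((1+a) * g (proj x) - a * x (Fin.last n))

/-- its derivative -/
noncomputable def reflD (g : Euc n → ℝ) (a : ℝ) (x : Euc (n+1)) : Euc (n+1) →L[ℝ] Euc (n+1) :=
  (embL n).comp (projL n) +
    ((1+a) • ((fderiv ℝ g (proj x)).comp (projL n)) - a • lastC n).smulRight (eN n)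

lemma reflD_apply (g : Euc n → ℝ) (a : ℝ) (x h : Euc (n+1)) :
    reflD g a x h = emb (proj h)
      ((1+a) * (fderiv ℝ g (proj x) (proj h)) - a * h (Fin.last n)) := by
  rw [emb_eq]
  simp [reflD, lastC, projL_apply, embL_apply]

lemma hasFDerivAt_reflMap {g : Euc n → ℝ} (hg : ContDiff ℝ 1 g) (a : ℝ) (x : Euc (n+1)) :
    HasFDerivAt (reflMap g a) (reflD g a x) x := by
  have hgd : HasFDerivAt (fun y : Euc (n+1) => g (proj y))
      ((fderiv ℝ g (proj x)).comp (projL n)) x := by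
    have h1 : HasFDerivAt g (fderiv ℝ g (proj x)) (projL n x) :=
      ((hg.differentiable one_ne_zero).differentiableAt).hasFDerivAt.congr_fderiv
        (by rw [projL_apply])
    have := h1.comp x (projL n).hasFDerivAt
    exact this.congr_of_eventuallyEq (Eventually.of_forall fun y => by simp [projL_apply])
  have hc : HasFDerivAt (fun y : Euc (n+1) => (1+a) * g (proj y) - a * y (Fin.last n))
      ((1+a) • ((fderiv ℝ g (proj x)).comp (projL n)) - a • lastC n) x := by
    have h2 : HasFDerivAt (fun y : Euc (n+1) => y (Fin.last n)) (lastC n) x :=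
      (lastC n).hasFDerivAt
    exact (hgd.const_mul (1+a)).sub (h2.const_mul a)
  have hsm : HasFDerivAt (fun y : Euc (n+1) =>
      ((1+a) * g (proj y) - a * y (Fin.last n)) • eN n)
      (((1+a) • ((fderiv ℝ g (proj x)).comp (projL n)) - a • lastC n).smulRight (eN n)) x :=
    hc.smul_const (eN n)
  have hemb : HasFDerivAt (fun y : Euc (n+1) => embL n (proj y))
      ((embL n).comp (projL n)) x := by
    have := ((embL n).comp (projL n)).hasFDerivAt (x := x)
    exact this.congr_of_eventuallyEq (Eventually.of_forall fun y => by simp [projL_apply])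
  have := hemb.add hsm
  have heq : (fun y : Euc (n+1) => embL n (proj y) +
      ((1+a) * g (proj y) - a * y (Fin.last n)) • eN n) = reflMap g a := by
    funext y; rw [reflMap, emb_eq]
  rw [← heq]
  exact this

lemma emb_sub (u u' : Euc n) (t t' : ℝ) : emb u t - emb u' t' = emb (u - u') (t - t') := by
  ext i
  induction i using Fin.lastCases with
  | last => simp [emb]
  | cast j => simp [emb]

lemma emb_add (u u' : Euc n) (t t' : ℝ) : emb u t + emb u' t' = emb (u + u') (t + t') := by
  ext i
  induction i using Fin.lastCases with
  | last => simp [emb]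
  | cast j => simp [emb]

lemma emb_smul (c : ℝ) (u : Euc n) (t : ℝ) : c • emb u t = emb (c • u) (c * t) := by
  ext i
  induction i using Fin.lastCases with
  | last => simp [emb]
  | cast j => simp [emb]

noncomputable def pull (g : Euc n → ℝ) (a : ℝ) (x u : Euc (n+1)) : Euc (n+1) :=
  emb (proj u + ((1+a) * u (Fin.last n)) • gradient g (proj x)) (-(a * u (Fin.last n)))

lemma inner_emb_right (u : Euc (n+1)) (p : Euc n) (t : ℝ) :
    (inner ℝ u (emb p t) : ℝ) = inner ℝ (proj u) p + t * u (Fin.last n) := by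
  rw [real_inner_comm, inner_emb, real_inner_comm]

lemma inner_pull (g : Euc n → ℝ) (a : ℝ) (x u h : Euc (n+1)) :
    (inner ℝ (pull g a x u) h : ℝ) = inner ℝ u (reflD g a x h) := by
  rw [pull, inner_emb, reflD_apply, inner_emb_right,
    fderiv_apply_eq_inner, inner_add_left, real_inner_smul_left]
  ring

lemma toDual_pull (g : Euc n → ℝ) (a : ℝ) (x u : Euc (n+1)) :
    (InnerProductSpace.toDual ℝ (Euc (n+1)) (pull g a x u)) =
      (InnerProductSpace.toDual ℝ (Euc (n+1)) u).comp (reflD g a x) := by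
  ext h
  exact inner_pull g a x u h

lemma proj_reflMap (g : Euc n → ℝ) (a : ℝ) (x : Euc (n+1)) :
    proj (reflMap g a x) = proj x := proj_emb _ _

lemma last_reflMap (g : Euc n → ℝ) (a : ℝ) (x : Euc (n+1)) :
    reflMap g a x (Fin.last n) = (1+a) * g (proj x) - a * x (Fin.last n) := emb_last _ _

lemma reflMap_fixed (g : Euc n → ℝ) (a : ℝ) {x : Euc (n+1)}
    (hx : x (Fin.last n) = g (proj x)) : reflMap g a x = x := by
  rw [reflMap, hx]
  have : (1+a) * g (proj x) - a * g (proj x) = g (proj x) := by ring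
  rw [this, ← hx, emb_proj]

lemma pull_at_graph (g : Euc n → ℝ) (x u : Euc (n+1)) :
    (-3 : ℝ) • pull g 1 x u + (4 : ℝ) • pull g (1/2) x u = u := by
  rw [pull, pull, emb_smul, emb_smul, emb_add]
  have h1 : (-3 : ℝ) • (proj u + ((1+1) * u (Fin.last n)) • gradient g (proj x)) +
      (4 : ℝ) • (proj u + ((1+1/2) * u (Fin.last n)) • gradient g (proj x)) = proj u := by
    rw [smul_add, smul_add, smul_smul, smul_smul]
    have e1 : (-3 : ℝ) * ((1+1) * u (Fin.last n)) + 4 * ((1+1/2) * u (Fin.last n)) = 0 := by ring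
    have e2 : (-3 : ℝ) • proj u + (4:ℝ) • proj u = proj u := by
      rw [← add_smul]; norm_num
    calc (-3 : ℝ) • proj u + ((-3:ℝ) * ((1+1) * u (Fin.last n))) • gradient g (proj x) +
          ((4:ℝ) • proj u + ((4:ℝ) * ((1+1/2) * u (Fin.last n))) • gradient g (proj x))
        = ((-3 : ℝ) • proj u + (4:ℝ) • proj u) +
          (((-3:ℝ) * ((1+1) * u (Fin.last n))) + (4:ℝ) * ((1+1/2) * u (Fin.last n))) •
            gradient g (proj x) := by rw [add_smul]; abel
      _ = proj u := by rw [e1, e2, zero_smul, add_zero]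
  have h2 : (-3 : ℝ) * -(1 * u (Fin.last n)) + 4 * -((1/2) * u (Fin.last n)) =
      u (Fin.last n) := by ring
  rw [h1, h2, emb_proj]

lemma norm_pull_le {g : Euc n → ℝ} {a G : ℝ} (ha0 : 0 ≤ a) (ha1 : a ≤ 1)
    {x : Euc (n+1)} (hGx : ‖gradient g (proj x)‖ ≤ G) (u : Euc (n+1)) :
    ‖pull g a x u‖ ≤ (2 + 2*G) * ‖u‖ := by
  have hG0 : 0 ≤ G := le_trans (norm_nonneg _) hGx
  refine (norm_emb_le _ _).trans ?_
  have h1 : ‖proj u + ((1+a) * u (Fin.last n)) • gradient g (proj x)‖ ≤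
      ‖u‖ + 2 * G * ‖u‖ := by
    refine (norm_add_le _ _).trans ?_
    have := norm_proj_le u
    have h2 : ‖((1+a) * u (Fin.last n)) • gradient g (proj x)‖ ≤ 2 * G * ‖u‖ := by
      rw [norm_smul, Real.norm_eq_abs, abs_mul, abs_of_nonneg (by linarith : (0:ℝ) ≤ 1+a)]
      have h := mul_le_mul (mul_le_mul (by linarith : 1+a ≤ 2) (abs_last_le u)
        (abs_nonneg _) (by norm_num)) hGx (norm_nonneg _)
        (by positivity)
      calc (1+a) * |u (Fin.last n)| * ‖gradient g (proj x)‖ ≤ 2 * ‖u‖ * G := h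
        _ = 2 * G * ‖u‖ := by ring
    linarith
  have h3 : |(-(a * u (Fin.last n)))| ≤ ‖u‖ := by
    rw [abs_neg, abs_mul, abs_of_nonneg ha0]
    have := abs_last_le u
    nlinarith [abs_nonneg (u (Fin.last n)), norm_nonneg u]
  linarith

lemma pull_diff_le {g : Euc n → ℝ} {a G D K : ℝ} (ha0 : 0 ≤ a) (ha1 : a ≤ 1)
    {x y u u' : Euc (n+1)}
    (hGx : ‖gradient g (proj x)‖ ≤ G)
    (hD : ‖gradient g (proj x) - gradient g (proj y)‖ ≤ D)
    (hu' : ‖u'‖ ≤ K) :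
    ‖pull g a x u - pull g a y u'‖ ≤ (2 + 2*G) * ‖u - u'‖ + 2 * K * D := by
  have hG0 : 0 ≤ G := le_trans (norm_nonneg _) hGx
  have hK0 : 0 ≤ K := le_trans (norm_nonneg _) hu'
  have hD0 : 0 ≤ D := le_trans (norm_nonneg _) hD
  rw [pull, pull, emb_sub]
  refine (norm_emb_le _ _).trans ?_
  have key : (proj u + ((1+a) * u (Fin.last n)) • gradient g (proj x)) -
      (proj u' + ((1+a) * u' (Fin.last n)) • gradient g (proj y)) =
      proj (u - u') + ((1+a) * (u (Fin.last n) - u' (Fin.last n))) • gradient g (proj x)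
      + ((1+a) * u' (Fin.last n)) • (gradient g (proj x) - gradient g (proj y)) := by
    rw [proj_sub]
    module
  rw [key]
  have hlast : |u (Fin.last n) - u' (Fin.last n)| ≤ ‖u - u'‖ := by
    have := abs_last_le (u - u')
    rwa [last_sub] at this
  have hlast' : |u' (Fin.last n)| ≤ K := le_trans (abs_last_le u') hu'
  have h1a : (0:ℝ) ≤ 1 + a := by linarith
  have e1 : ‖proj (u - u')‖ ≤ ‖u - u'‖ := norm_proj_le _
  have e2 : ‖((1+a) * (u (Fin.last n) - u' (Fin.last n))) • gradient g (proj x)‖ ≤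
      2 * G * ‖u - u'‖ := by
    rw [norm_smul, Real.norm_eq_abs, abs_mul, abs_of_nonneg h1a]
    have h := mul_le_mul (mul_le_mul (by linarith : 1+a ≤ 2) hlast
      (abs_nonneg _) (by norm_num)) hGx (norm_nonneg _) (by positivity)
    calc (1+a) * |u (Fin.last n) - u' (Fin.last n)| * ‖gradient g (proj x)‖
        ≤ 2 * ‖u - u'‖ * G := h
      _ = 2 * G * ‖u - u'‖ := by ring
  have e3 : ‖((1+a) * u' (Fin.last n)) • (gradient g (proj x) - gradient g (proj y))‖ ≤
      2 * K * D := by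
    rw [norm_smul, Real.norm_eq_abs, abs_mul, abs_of_nonneg h1a]
    have h := mul_le_mul (mul_le_mul (by linarith : 1+a ≤ 2) hlast'
      (abs_nonneg _) (by norm_num)) hD (norm_nonneg _) (by positivity)
    exact le_trans h (by ring_nf; exact le_refl _)
  have e4 : |(-(a * u (Fin.last n))) - (-(a * u' (Fin.last n)))| ≤ ‖u - u'‖ := by
    have : (-(a * u (Fin.last n))) - (-(a * u' (Fin.last n))) =
        -(a * (u (Fin.last n) - u' (Fin.last n))) := by ring
    rw [this, abs_neg, abs_mul, abs_of_nonneg ha0]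
    have h := mul_le_mul ha1 hlast (abs_nonneg _) (by norm_num)
    linarith
  have tri : ‖proj (u - u') + ((1+a) * (u (Fin.last n) - u' (Fin.last n))) • gradient g (proj x)
        + ((1+a) * u' (Fin.last n)) • (gradient g (proj x) - gradient g (proj y))‖
      ≤ ‖proj (u - u')‖ + ‖((1+a) * (u (Fin.last n) - u' (Fin.last n))) • gradient g (proj x)‖
        + ‖((1+a) * u' (Fin.last n)) • (gradient g (proj x) - gradient g (proj y))‖ :=
    norm_add₃_le
  linarith

lemma rpow_lip {α L d : ℝ} (hα : 0 < α) (hα1 : α ≤ 1) (hL : 1 ≤ L) (hd : 0 ≤ d) :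
    (L * d) ^ α ≤ L * d ^ α := by
  rw [Real.mul_rpow (by linarith) hd]
  have h1 : L ^ α ≤ L ^ (1:ℝ) := Real.rpow_le_rpow_of_exponent_le hL hα1
  rw [Real.rpow_one] at h1
  exact mul_le_mul_of_nonneg_right h1 (Real.rpow_nonneg hd α)

lemma rpow_mono {α d e : ℝ} (hα : 0 < α) (hd : 0 ≤ d) (hde : d ≤ e) : d ^ α ≤ e ^ α :=
  Real.rpow_le_rpow hd hde (le_of_lt hα)


set_option maxHeartbeats 2000000 in
/-- `C^{1,α}` extension from the part of a cylinder above the graph of a `C¹`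
function with `α`-Hölder gradient to the whole cylinder, with norm control
`‖w̃‖_{C^{1,α}} ≤ C(N) (1 + ‖∇g‖_{C^{0,α}})⁴ ‖v‖_{C^{1,α}}`. -/
theorem stmt_13 (n : ℕ) (hn : 1 ≤ n) :
    ∃ C > (0:ℝ), ∀ (α : ℝ), α ∈ Set.Ioc (0:ℝ) 1 → ∀ (r : ℝ), 0 < r →
    ∀ (g : Euc n → ℝ), ContDiff ℝ 1 g →
      (∀ K : Set (Euc n), IsCompact K →
        ∃ H : ℝ, ∀ x ∈ K, ∀ y ∈ K,
          ‖gradient g x - gradient g y‖ ≤ H * ‖x - y‖ ^ α) →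
    ∀ G : ℝ, 0 ≤ G →
      -- ‖∇g‖_{C^{0,α}(B'(0,r))} ≤ G
      (∀ x ∈ closedBall (0 : Euc n) r, ‖gradient g x‖ ≤ G) →
      (∀ x ∈ closedBall (0 : Euc n) r, ∀ y ∈ closedBall (0 : Euc n) r,
        ‖gradient g x - gradient g y‖ ≤ G * ‖x - y‖ ^ α) →
    ∀ (v : Euc (n + 1) → ℝ) (v' : Euc (n + 1) → Euc (n + 1)) (K : ℝ), 0 ≤ K →
      -- v ∈ C^{1,α}(closure (Ω ∩ (B'(0,r) × ℝ))) with ‖v‖_{C^{1,α}} ≤ K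
      (∀ x ∈ closure (epigraph g ∩ cyl r),
        HasGradientWithinAt v (v' x) (closure (epigraph g ∩ cyl r)) x) →
      (∀ x ∈ closure (epigraph g ∩ cyl r), |v x| ≤ K) →
      (∀ x ∈ closure (epigraph g ∩ cyl r), ‖v' x‖ ≤ K) →
      (∀ x ∈ closure (epigraph g ∩ cyl r), ∀ y ∈ closure (epigraph g ∩ cyl r),
        |v x - v y| ≤ K * ‖x - y‖ ^ α) →
      (∀ x ∈ closure (epigraph g ∩ cyl r), ∀ y ∈ closure (epigraph g ∩ cyl r),
        ‖v' x - v' y‖ ≤ K * ‖x - y‖ ^ α) →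
      -- extension to the full cylinder
      ∃ (w : Euc (n + 1) → ℝ) (w' : Euc (n + 1) → Euc (n + 1)),
        (∀ x ∈ closure (epigraph g ∩ cyl r), w x = v x) ∧
        (∀ x ∈ closure (cyl r), HasGradientWithinAt w (w' x) (closure (cyl r)) x) ∧
        (∀ x ∈ closure (cyl r), |w x| ≤ C * (1 + G) ^ 4 * K) ∧
        (∀ x ∈ closure (cyl r), ‖w' x‖ ≤ C * (1 + G) ^ 4 * K) ∧
        (∀ x ∈ closure (cyl r), ∀ y ∈ closure (cyl r),
          |w x - w y| ≤ C * (1 + G) ^ 4 * K * ‖x - y‖ ^ α) ∧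
        (∀ x ∈ closure (cyl r), ∀ y ∈ closure (cyl r),
          ‖w' x - w' y‖ ≤ C * (1 + G) ^ 4 * K * ‖x - y‖ ^ α) := by
  classical
  refine ⟨200, by norm_num, ?_⟩
  intro α hα r hr g hg _hloc G hG0 hGb hGα v v' K hK0 hv hvK hv'K hvH hv'H
  have hα0 : 0 < α := hα.1
  have hα1 : α ≤ 1 := hα.2
  have hgc : Continuous g := hg.continuous
  have hS : closure (epigraph g ∩ cyl r) =
      {x : Euc (n+1) | proj x ∈ closedBall (0 : Euc n) r ∧ g (proj x) ≤ x (Fin.last n)} :=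
    closure_epi_cyl hr hgc
  have hScyl : closure (cyl (n := n) r) = {x : Euc (n+1) | proj x ∈ closedBall (0 : Euc n) r} :=
    closure_cyl hr
  set S := closure (epigraph g ∩ cyl r) with hSdef
  set B : Set (Euc (n+1)) :=
    {x : Euc (n+1) | proj x ∈ closedBall (0 : Euc n) r ∧ x (Fin.last n) ≤ g (proj x)} with hBdef
  set L : ℝ := 2 + 2 * G with hLdef
  have hL1 : (1:ℝ) ≤ L := by simp only [hLdef]; linarith
  -- the reflected extension
  set wb : Euc (n+1) → ℝ :=
    fun x => -3 * v (reflMap g 1 x) + 4 * v (reflMap g (1/2) x) with hwbdef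
  set wb' : Euc (n+1) → Euc (n+1) :=
    fun x => (-3 : ℝ) • pull g 1 x (v' (reflMap g 1 x)) +
      (4 : ℝ) • pull g (1/2) x (v' (reflMap g (1/2) x)) with hwb'def
  set w : Euc (n+1) → ℝ :=
    fun x => if g (proj x) ≤ x (Fin.last n) then v x else wb x with hwdef
  set w' : Euc (n+1) → Euc (n+1) :=
    fun x => if g (proj x) ≤ x (Fin.last n) then v' x else wb' x with hw'def
  -- membership facts
  have hreflS : ∀ a : ℝ, 0 ≤ a → ∀ x ∈ B, reflMap g a x ∈ S := by
    intro a ha x hx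
    rw [hS]
    refine ⟨by rw [proj_reflMap]; exact hx.1, ?_⟩
    rw [proj_reflMap, last_reflMap]
    have := mul_le_mul_of_nonneg_left hx.2 ha
    linarith
  have hAS : ∀ x : Euc (n+1), proj x ∈ closedBall (0 : Euc n) r →
      g (proj x) ≤ x (Fin.last n) → x ∈ S := by
    intro x h1 h2; rw [hS]; exact ⟨h1, h2⟩
  have hSsub : S ⊆ closure (cyl (n := n) r) := by
    rw [hS, hScyl]; exact fun x hx => hx.1
  have hBsub : B ⊆ closure (cyl (n := n) r) := by
    rw [hScyl]; exact fun x hx => hx.1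
  -- w agrees with v on S and with wb on B
  have hwbS : ∀ x ∈ S, x (Fin.last n) = g (proj x) → wb x = v x := by
    intro x _ hxg
    simp only [hwbdef]
    rw [reflMap_fixed g 1 hxg, reflMap_fixed g (1/2) hxg]
    ring
  have hwS : ∀ x ∈ S, w x = v x := by
    intro x hx
    have hx' := hx; rw [hS] at hx'
    simp only [hwdef, if_pos hx'.2]
  have hwB : ∀ x ∈ B, w x = wb x := by
    intro x hx
    by_cases hc : g (proj x) ≤ x (Fin.last n)
    · have heq : x (Fin.last n) = g (proj x) := le_antisymm hx.2 hc
      simp only [hwdef, if_pos hc]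
      exact (hwbS x (hAS x hx.1 hc) heq).symm
    · simp only [hwdef, if_neg hc]
  have hwb'g : ∀ x : Euc (n+1), x (Fin.last n) = g (proj x) → wb' x = v' x := by
    intro x hxg
    simp only [hwb'def]
    rw [reflMap_fixed g 1 hxg, reflMap_fixed g (1/2) hxg]
    exact pull_at_graph g x (v' x)
  -- reflection is Lipschitz with constant L
  have hreflLip : ∀ a : ℝ, 0 ≤ a → a ≤ 1 → ∀ x ∈ closure (cyl (n := n) r),
      ∀ y ∈ closure (cyl (n := n) r), ‖reflMap g a x - reflMap g a y‖ ≤ L * ‖x - y‖ := by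
    intro a ha0 ha1 x hx y hy
    rw [hScyl] at hx hy
    rw [reflMap, reflMap, emb_sub]
    refine (norm_emb_le _ _).trans ?_
    have h1 : ‖proj x - proj y‖ ≤ ‖x - y‖ := by rw [← proj_sub]; exact norm_proj_le _
    have h2 : |g (proj x) - g (proj y)| ≤ G * ‖x - y‖ := by
      refine (g_lip hg hGb hx hy).trans ?_
      exact mul_le_mul_of_nonneg_left h1 hG0
    have h3 : |x (Fin.last n) - y (Fin.last n)| ≤ ‖x - y‖ := by
      rw [← last_sub]; exact abs_last_le _
    have h4 : |((1+a) * g (proj x) - a * x (Fin.last n)) -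
        ((1+a) * g (proj y) - a * y (Fin.last n))| ≤
        (1+a) * |g (proj x) - g (proj y)| + a * |x (Fin.last n) - y (Fin.last n)| := by
      have : ((1+a) * g (proj x) - a * x (Fin.last n)) -
          ((1+a) * g (proj y) - a * y (Fin.last n)) =
          (1+a) * (g (proj x) - g (proj y)) - a * (x (Fin.last n) - y (Fin.last n)) := by ring
      rw [this]
      refine (abs_sub _ _).trans ?_
      rw [abs_mul, abs_mul, abs_of_nonneg (by linarith : (0:ℝ) ≤ 1+a), abs_of_nonneg ha0]
    have h5 : (1+a) * |g (proj x) - g (proj y)| ≤ 2 * (G * ‖x - y‖) := by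
      have := mul_le_mul (by linarith : 1+a ≤ 2) h2 (abs_nonneg _) (by norm_num)
      linarith
    have h6 : a * |x (Fin.last n) - y (Fin.last n)| ≤ ‖x - y‖ := by
      have := mul_le_mul ha1 h3 (abs_nonneg _) (by norm_num)
      linarith
    simp only [hLdef]
    nlinarith [norm_nonneg (x - y)]
  have ha1 : (0:ℝ) ≤ 1 ∧ (1:ℝ) ≤ 1 := ⟨by norm_num, le_refl 1⟩
  have ha2 : (0:ℝ) ≤ 1/2 ∧ (1/2:ℝ) ≤ 1 := ⟨by norm_num, by norm_num⟩
  have hGproj : ∀ x ∈ closure (cyl (n := n) r), ‖gradient g (proj x)‖ ≤ G := by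
    intro x hx; rw [hScyl] at hx; exact hGb _ hx
  have hvKR : ∀ a : ℝ, 0 ≤ a → ∀ x ∈ B, |v (reflMap g a x)| ≤ K := by
    intro a ha x hx; exact hvK _ (hreflS a ha x hx)
  have hv'KR : ∀ a : ℝ, 0 ≤ a → ∀ x ∈ B, ‖v' (reflMap g a x)‖ ≤ K := by
    intro a ha x hx; exact hv'K _ (hreflS a ha x hx)
  have hwbBound : ∀ x ∈ B, |wb x| ≤ 7 * K := by
    intro x hx
    simp only [hwbdef]
    have h1 := hvKR 1 (by norm_num) x hx
    have h2 := hvKR (1/2) (by norm_num) x hx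
    calc |(-3) * v (reflMap g 1 x) + 4 * v (reflMap g (1/2) x)|
        ≤ |(-3) * v (reflMap g 1 x)| + |4 * v (reflMap g (1/2) x)| := abs_add_le _ _
      _ = 3 * |v (reflMap g 1 x)| + 4 * |v (reflMap g (1/2) x)| := by
          rw [abs_mul, abs_mul]; norm_num
      _ ≤ 7 * K := by linarith
  have hwb'Bound : ∀ x ∈ B, ‖wb' x‖ ≤ 7 * L * K := by
    intro x hx
    simp only [hwb'def]
    have hGx := hGproj x (hBsub hx)
    have p1 := norm_pull_le (g := g) (by norm_num : (0:ℝ) ≤ 1) le_rfl hGx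
      (v' (reflMap g 1 x))
    have p2 := norm_pull_le (g := g) (by norm_num : (0:ℝ) ≤ 1/2) (by norm_num) hGx
      (v' (reflMap g (1/2) x))
    have h1 := hv'KR 1 (by norm_num) x hx
    have h2 := hv'KR (1/2) (by norm_num) x hx
    have hL0 : (0:ℝ) ≤ 2 + 2*G := by linarith
    calc ‖(-3 : ℝ) • pull g 1 x (v' (reflMap g 1 x)) +
          (4 : ℝ) • pull g (1/2) x (v' (reflMap g (1/2) x))‖
        ≤ ‖(-3 : ℝ) • pull g 1 x (v' (reflMap g 1 x))‖ +
          ‖(4 : ℝ) • pull g (1/2) x (v' (reflMap g (1/2) x))‖ := norm_add_le _ _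
      _ = 3 * ‖pull g 1 x (v' (reflMap g 1 x))‖ +
          4 * ‖pull g (1/2) x (v' (reflMap g (1/2) x))‖ := by
          rw [norm_smul, norm_smul, Real.norm_eq_abs, Real.norm_eq_abs]; norm_num
      _ ≤ 3 * ((2 + 2*G) * K) + 4 * ((2 + 2*G) * K) := by
          have b1 : ‖pull g 1 x (v' (reflMap g 1 x))‖ ≤ (2 + 2*G) * K :=
            p1.trans (mul_le_mul_of_nonneg_left h1 hL0)
          have b2 : ‖pull g (1/2) x (v' (reflMap g (1/2) x))‖ ≤ (2 + 2*G) * K :=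
            p2.trans (mul_le_mul_of_nonneg_left h2 hL0)
          nlinarith
      _ = 7 * L * K := by simp only [hLdef]; ring
  -- Hoelder of reflected distance
  have hRd : ∀ a : ℝ, 0 ≤ a → a ≤ 1 → ∀ x ∈ B, ∀ y ∈ B,
      ‖reflMap g a x - reflMap g a y‖ ^ α ≤ L * ‖x - y‖ ^ α := by
    intro a ha0 ha1' x hx y hy
    have h1 := hreflLip a ha0 ha1' x (hBsub hx) y (hBsub hy)
    have h2 : ‖reflMap g a x - reflMap g a y‖ ^ α ≤ (L * ‖x - y‖) ^ α :=
      rpow_mono hα0 (norm_nonneg _) h1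
    exact h2.trans (rpow_lip hα0 hα1 hL1 (norm_nonneg _))
  have hvHR : ∀ a : ℝ, 0 ≤ a → a ≤ 1 → ∀ x ∈ B, ∀ y ∈ B,
      |v (reflMap g a x) - v (reflMap g a y)| ≤ K * (L * ‖x - y‖ ^ α) := by
    intro a ha0 ha1' x hx y hy
    have h1 := hvH _ (hreflS a ha0 x hx) _ (hreflS a ha0 y hy)
    refine h1.trans ?_
    exact mul_le_mul_of_nonneg_left (hRd a ha0 ha1' x hx y hy) hK0
  have hv'HR : ∀ a : ℝ, 0 ≤ a → a ≤ 1 → ∀ x ∈ B, ∀ y ∈ B,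
      ‖v' (reflMap g a x) - v' (reflMap g a y)‖ ≤ K * (L * ‖x - y‖ ^ α) := by
    intro a ha0 ha1' x hx y hy
    have h1 := hv'H _ (hreflS a ha0 x hx) _ (hreflS a ha0 y hy)
    refine h1.trans ?_
    exact mul_le_mul_of_nonneg_left (hRd a ha0 ha1' x hx y hy) hK0
  have hwbH : ∀ x ∈ B, ∀ y ∈ B, |wb x - wb y| ≤ 7 * (K * L) * ‖x - y‖ ^ α := by
    intro x hx y hy
    simp only [hwbdef]
    have h1 := hvHR 1 (by norm_num) le_rfl x hx y hy
    have h2 := hvHR (1/2) (by norm_num) (by norm_num) x hx y hy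
    have key : (-3) * v (reflMap g 1 x) + 4 * v (reflMap g (1/2) x) -
        ((-3) * v (reflMap g 1 y) + 4 * v (reflMap g (1/2) y)) =
        (-3) * (v (reflMap g 1 x) - v (reflMap g 1 y)) +
        4 * (v (reflMap g (1/2) x) - v (reflMap g (1/2) y)) := by ring
    rw [key]
    calc |(-3) * (v (reflMap g 1 x) - v (reflMap g 1 y)) +
          4 * (v (reflMap g (1/2) x) - v (reflMap g (1/2) y))|
        ≤ 3 * |v (reflMap g 1 x) - v (reflMap g 1 y)| +
          4 * |v (reflMap g (1/2) x) - v (reflMap g (1/2) y)| := by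
          refine (abs_add_le _ _).trans ?_
          rw [abs_mul, abs_mul]; norm_num
      _ ≤ 3 * (K * (L * ‖x - y‖ ^ α)) + 4 * (K * (L * ‖x - y‖ ^ α)) :=
          add_le_add (mul_le_mul_of_nonneg_left h1 (by norm_num))
            (mul_le_mul_of_nonneg_left h2 (by norm_num))
      _ = 7 * (K * L) * ‖x - y‖ ^ α := by ring
  have hwb'H : ∀ x ∈ B, ∀ y ∈ B,
      ‖wb' x - wb' y‖ ≤ (7 * (K * L * L) + 14 * (K * G)) * ‖x - y‖ ^ α := by
    intro x hx y hy
    simp only [hwb'def]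
    have hGx := hGproj x (hBsub hx)
    have hDxy : ‖gradient g (proj x) - gradient g (proj y)‖ ≤ G * ‖x - y‖ ^ α := by
      refine (hGα (proj x) hx.1 (proj y) hy.1).trans ?_
      refine mul_le_mul_of_nonneg_left ?_ hG0
      refine rpow_mono hα0 (norm_nonneg _) ?_
      rw [← proj_sub]; exact norm_proj_le _
    have d1 := pull_diff_le (g := g) (by norm_num : (0:ℝ) ≤ 1) le_rfl hGx hDxy
      (hv'KR 1 (by norm_num) y hy)
      (u := v' (reflMap g 1 x))
    have d2 := pull_diff_le (g := g) (by norm_num : (0:ℝ) ≤ 1/2) (by norm_num) hGx hDxy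
      (hv'KR (1/2) (by norm_num) y hy)
      (u := v' (reflMap g (1/2) x))
    have e1 := hv'HR 1 (by norm_num) le_rfl x hx y hy
    have e2 := hv'HR (1/2) (by norm_num) (by norm_num) x hx y hy
    have keygen : ∀ a b c d : Euc (n+1), ((-3 : ℝ) • a + (4 : ℝ) • b) - ((-3 : ℝ) • c + (4 : ℝ) • d) =
        (-3 : ℝ) • (a - c) + (4 : ℝ) • (b - d) := by
      intro a b c d; module
    have key := keygen (pull g 1 x (v' (reflMap g 1 x))) (pull g (1/2) x (v' (reflMap g (1/2) x)))
      (pull g 1 y (v' (reflMap g 1 y))) (pull g (1/2) y (v' (reflMap g (1/2) y)))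
    rw [key]
    have hL0 : (0:ℝ) ≤ 2 + 2*G := by linarith
    have hel : (0:ℝ) ≤ ‖x - y‖ ^ α := Real.rpow_nonneg (norm_nonneg _) α
    calc ‖(-3 : ℝ) • (pull g 1 x (v' (reflMap g 1 x)) - pull g 1 y (v' (reflMap g 1 y))) +
          (4 : ℝ) • (pull g (1/2) x (v' (reflMap g (1/2) x)) -
            pull g (1/2) y (v' (reflMap g (1/2) y)))‖
        ≤ 3 * ‖pull g 1 x (v' (reflMap g 1 x)) - pull g 1 y (v' (reflMap g 1 y))‖ +
          4 * ‖pull g (1/2) x (v' (reflMap g (1/2) x)) -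
            pull g (1/2) y (v' (reflMap g (1/2) y))‖ := by
          refine (norm_add_le _ _).trans ?_
          rw [norm_smul, norm_smul, Real.norm_eq_abs, Real.norm_eq_abs]
          norm_num
      _ ≤ (7 * (K * L * L) + 14 * (K * G)) * ‖x - y‖ ^ α := by
          have b1 : ‖pull g 1 x (v' (reflMap g 1 x)) - pull g 1 y (v' (reflMap g 1 y))‖ ≤
              (2 + 2*G) * (K * (L * ‖x - y‖ ^ α)) + 2 * K * (G * ‖x - y‖ ^ α) := by
            refine d1.trans ?_
            have := mul_le_mul_of_nonneg_left e1 hL0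
            linarith
          have b2 : ‖pull g (1/2) x (v' (reflMap g (1/2) x)) -
              pull g (1/2) y (v' (reflMap g (1/2) y))‖ ≤
              (2 + 2*G) * (K * (L * ‖x - y‖ ^ α)) + 2 * K * (G * ‖x - y‖ ^ α) := by
            refine d2.trans ?_
            have := mul_le_mul_of_nonneg_left e2 hL0
            linarith
          have hLL : (2 + 2*G) = L := by simp only [hLdef]
          rw [hLL] at b1 b2
          calc 3 * ‖pull g 1 x (v' (reflMap g 1 x)) - pull g 1 y (v' (reflMap g 1 y))‖ +
              4 * ‖pull g (1/2) x (v' (reflMap g (1/2) x)) -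
                pull g (1/2) y (v' (reflMap g (1/2) y))‖
              ≤ 3 * (L * (K * (L * ‖x - y‖ ^ α)) + 2 * K * (G * ‖x - y‖ ^ α))
                + 4 * (L * (K * (L * ‖x - y‖ ^ α)) + 2 * K * (G * ‖x - y‖ ^ α)) :=
                add_le_add (mul_le_mul_of_nonneg_left b1 (by norm_num))
                  (mul_le_mul_of_nonneg_left b2 (by norm_num))
            _ = (7 * (K * L * L) + 14 * (K * G)) * ‖x - y‖ ^ α := by ring
  -- derivative of wb within B
  have hDB : ∀ x ∈ B, HasFDerivWithinAt wb
      (InnerProductSpace.toDual ℝ (Euc (n+1)) (wb' x)) B x := by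
    intro x hx
    have m1 : MapsTo (reflMap g 1) B S := fun y hy => hreflS 1 (by norm_num) y hy
    have m2 : MapsTo (reflMap g (1/2)) B S := fun y hy => hreflS (1/2) (by norm_num) y hy
    have h1 : HasFDerivWithinAt v
        (InnerProductSpace.toDual ℝ (Euc (n+1)) (v' (reflMap g 1 x))) S (reflMap g 1 x) :=
      hasGradientWithinAt_iff_hasFDerivWithinAt.mp (hv _ (hreflS 1 (by norm_num) x hx))
    have h2 : HasFDerivWithinAt v
        (InnerProductSpace.toDual ℝ (Euc (n+1)) (v' (reflMap g (1/2) x))) S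
        (reflMap g (1/2) x) :=
      hasGradientWithinAt_iff_hasFDerivWithinAt.mp (hv _ (hreflS (1/2) (by norm_num) x hx))
    have c1 := h1.comp x ((hasFDerivAt_reflMap hg 1 x).hasFDerivWithinAt) m1
    have c2 := h2.comp x ((hasFDerivAt_reflMap hg (1/2) x).hasFDerivWithinAt) m2
    have hsum := (c1.const_mul (-3 : ℝ)).add (c2.const_mul (4 : ℝ))
    have heqd : InnerProductSpace.toDual ℝ (Euc (n+1)) (wb' x) =
        (-3 : ℝ) • ((InnerProductSpace.toDual ℝ (Euc (n+1))
            (v' (reflMap g 1 x))).comp (reflD g 1 x)) +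
        (4 : ℝ) • ((InnerProductSpace.toDual ℝ (Euc (n+1))
            (v' (reflMap g (1/2) x))).comp (reflD g (1/2) x)) := by
      simp only [hwb'def, map_add, map_smulₛₗ, starRingEnd_apply, star_trivial, toDual_pull]
    refine HasFDerivWithinAt.congr_fderiv ?_ heqd.symm
    exact hsum
  have hDA : ∀ x ∈ S, HasFDerivWithinAt w
      (InnerProductSpace.toDual ℝ (Euc (n+1)) (v' x)) S x := fun x hx =>
    (hasGradientWithinAt_iff_hasFDerivWithinAt.mp (hv x hx)).congr
      (fun y hy => hwS y hy) (hwS x hx)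
  have hDBw : ∀ x ∈ B, HasFDerivWithinAt w
      (InnerProductSpace.toDual ℝ (Euc (n+1)) (wb' x)) B x := fun x hx =>
    (hDB x hx).congr (fun y hy => hwB y hy) (hwB x hx)
  have hUopen : IsOpen {y : Euc (n+1) | g (proj y) < y (Fin.last n)} :=
    isOpen_lt (hgc.comp continuous_proj) continuous_last
  have hU'open : IsOpen {y : Euc (n+1) | y (Fin.last n) < g (proj y)} :=
    isOpen_lt continuous_last (hgc.comp continuous_proj)
  have hdiff : ∀ x ∈ closure (cyl (n := n) r),
      HasGradientWithinAt w (w' x) (closure (cyl (n := n) r)) x := by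
    intro x hx
    rw [hasGradientWithinAt_iff_hasFDerivWithinAt]
    have hxc : proj x ∈ closedBall (0 : Euc n) r := by rwa [hScyl] at hx
    rcases lt_trichotomy (g (proj x)) (x (Fin.last n)) with hlt | heq | hgt
    · have hU : {y : Euc (n+1) | g (proj y) < y (Fin.last n)} ∈ nhds x :=
        hUopen.mem_nhds hlt
      have hsub : closure (cyl (n := n) r) ∩
          {y : Euc (n+1) | g (proj y) < y (Fin.last n)} ⊆ S := by
        rintro y ⟨hy1, hy2⟩
        exact hAS y (by rwa [hScyl] at hy1) (le_of_lt hy2)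
      have h1 := (hDA x (hAS x hxc hlt.le)).mono hsub
      have hw'x : w' x = v' x := by simp only [hw'def, if_pos hlt.le]
      rw [hw'x]
      exact (hasFDerivWithinAt_inter hU).mp h1
    · have hxS : x ∈ S := hAS x hxc heq.le
      have hxB : x ∈ B := ⟨hxc, heq.ge⟩
      have hA := hDA x hxS
      have hBd : HasFDerivWithinAt w
          (InnerProductSpace.toDual ℝ (Euc (n+1)) (v' x)) B x := by
        refine (hDBw x hxB).congr_fderiv ?_
        rw [hwb'g x heq.symm]
      have hunion := hA.union hBd
      have hset : S ∪ B = closure (cyl (n := n) r) := by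
        rw [hS, hScyl, hBdef]
        ext y
        constructor
        · rintro (hy | hy) <;> exact hy.1
        · intro hy
          rcases le_total (g (proj y)) (y (Fin.last n)) with h | h
          · exact Or.inl ⟨hy, h⟩
          · exact Or.inr ⟨hy, h⟩
      have hw'x : w' x = v' x := by simp only [hw'def, if_pos heq.le]
      rw [hw'x, ← hset]
      exact hunion
    · have hU : {y : Euc (n+1) | y (Fin.last n) < g (proj y)} ∈ nhds x :=
        hU'open.mem_nhds hgt
      have hsub : closure (cyl (n := n) r) ∩
          {y : Euc (n+1) | y (Fin.last n) < g (proj y)} ⊆ B := by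
        rintro y ⟨hy1, hy2⟩
        exact ⟨by rwa [hScyl] at hy1, le_of_lt hy2⟩
      have hxB : x ∈ B := ⟨hxc, hgt.le⟩
      have h1 := (hDBw x hxB).mono hsub
      have hw'x : w' x = wb' x := by simp only [hw'def, if_neg (not_le.mpr hgt)]
      rw [hw'x]
      exact (hasFDerivWithinAt_inter hU).mp h1
  -- segment point on the graph between a point below and a point above
  have hseg : ∀ x ∈ B, ∀ y ∈ S, ∃ p, p ∈ S ∧ p ∈ B ∧
      ‖x - p‖ ≤ ‖x - y‖ ∧ ‖p - y‖ ≤ ‖x - y‖ := by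
    intro x hx y hy
    rw [hS] at hy
    have hcurve : Continuous (fun t : ℝ => x + t • (y - x)) :=
      continuous_const.add (continuous_id.smul continuous_const)
    set φ : ℝ → ℝ := fun t => (x + t • (y - x)) (Fin.last n) - g (proj (x + t • (y - x)))
      with hφdef
    have hφc : Continuous φ :=
      (continuous_last.comp hcurve).sub (hgc.comp (continuous_proj.comp hcurve))
    have hφ0 : φ 0 ≤ 0 := by
      simp only [hφdef, zero_smul, add_zero]
      linarith [hx.2]
    have hφ1 : 0 ≤ φ 1 := by
      simp only [hφdef, one_smul, add_sub_cancel]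
      linarith [hy.2]
    obtain ⟨t, ht, hφt⟩ := intermediate_value_Icc (by norm_num : (0:ℝ) ≤ 1)
      hφc.continuousOn ⟨hφ0, hφ1⟩
    set p := x + t • (y - x) with hpdef
    have hppr : proj p = proj x + t • (proj y - proj x) := by rw [hpdef]; ext i; simp [proj]
    have hpc : proj p ∈ closedBall (0 : Euc n) r := by
      have hconv : proj p = (1 - t) • proj x + t • proj y := by rw [hppr]; module
      rw [hconv]
      exact convex_closedBall (0 : Euc n) r hx.1 hy.1
        (by linarith [ht.2]) ht.1 (by ring)
    have hpg : p (Fin.last n) = g (proj p) := by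
      have : φ t = 0 := hφt
      simp only [hφdef] at this
      linarith [this]
    have hxp : ‖x - p‖ ≤ ‖x - y‖ := by
      have h1 : x - p = (-t) • (y - x) := by rw [hpdef]; module
      rw [h1, norm_smul, Real.norm_eq_abs, abs_neg, abs_of_nonneg ht.1, norm_sub_rev]
      nlinarith [norm_nonneg (x - y), ht.1, ht.2]
    have hpy : ‖p - y‖ ≤ ‖x - y‖ := by
      have h1 : p - y = (1 - t) • (x - y) := by rw [hpdef]; module
      rw [h1, norm_smul, Real.norm_eq_abs, abs_of_nonneg (by linarith [ht.2] : (0:ℝ) ≤ 1 - t)]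
      nlinarith [norm_nonneg (x - y), ht.1, ht.2]
    exact ⟨p, hAS p hpc hpg.ge, ⟨hpc, hpg.le⟩, hxp, hpy⟩
  -- agreement of w' on the pieces
  have hw'S : ∀ x ∈ S, w' x = v' x := by
    intro x hx
    rw [hS] at hx
    simp only [hw'def, if_pos hx.2]
  have hw'B : ∀ x ∈ B, w' x = wb' x := by
    intro x hx
    by_cases hc : g (proj x) ≤ x (Fin.last n)
    · have heq : x (Fin.last n) = g (proj x) := le_antisymm hx.2 hc
      simp only [hw'def, if_pos hc]
      exact (hwb'g x heq).symm
    · simp only [hw'def, if_neg hc]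
  -- power facts
  have h1G : (1:ℝ) ≤ 1 + G := by linarith
  have hpow1 : (1:ℝ) ≤ (1+G)^4 := one_le_pow₀ h1G
  have hpow2 : (1+G) ≤ (1+G)^4 := le_self_pow₀ h1G (by norm_num)
  have hpow3 : (1+G)^2 ≤ (1+G)^4 := pow_le_pow_right₀ h1G (by norm_num)
  -- Hoelder estimates for w and w' on the whole cylinder
  have hwH : ∀ x ∈ closure (cyl (n := n) r), ∀ y ∈ closure (cyl (n := n) r),
      |w x - w y| ≤ (7 * (K * L) + K) * ‖x - y‖ ^ α := by
    have hBB : ∀ x ∈ B, ∀ y ∈ B, |w x - w y| ≤ 7 * (K * L) * ‖x - y‖ ^ α := by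
      intro x hx y hy
      rw [hwB x hx, hwB y hy]; exact hwbH x hx y hy
    have hAA : ∀ x ∈ S, ∀ y ∈ S, |w x - w y| ≤ K * ‖x - y‖ ^ α := by
      intro x hx y hy
      rw [hwS x hx, hwS y hy]; exact hvH x hx y hy
    have hcoefsum : ∀ x y : Euc (n+1), 0 ≤ ‖x - y‖ ^ α := fun x y =>
      Real.rpow_nonneg (norm_nonneg _) α
    have hKL0 : 0 ≤ 7 * (K * L) := by positivity
    have hM : ∀ x ∈ B, ∀ y ∈ S, |w x - w y| ≤ (7 * (K * L) + K) * ‖x - y‖ ^ α := by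
      intro x hx y hy
      obtain ⟨p, hpS, hpB, hd1, hd2⟩ := hseg x hx y hy
      have e1 := hBB x hx p hpB
      have e2 := hAA p hpS y hy
      have r1 : ‖x - p‖ ^ α ≤ ‖x - y‖ ^ α := rpow_mono hα0 (norm_nonneg _) hd1
      have r2 : ‖p - y‖ ^ α ≤ ‖x - y‖ ^ α := rpow_mono hα0 (norm_nonneg _) hd2
      calc |w x - w y| ≤ |w x - w p| + |w p - w y| := abs_sub_le _ _ _
        _ ≤ 7 * (K * L) * ‖x - y‖ ^ α + K * ‖x - y‖ ^ α := by
            have q1 : 7 * (K * L) * ‖x - p‖ ^ α ≤ 7 * (K * L) * ‖x - y‖ ^ α :=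
              mul_le_mul_of_nonneg_left r1 hKL0
            have q2 : K * ‖p - y‖ ^ α ≤ K * ‖x - y‖ ^ α :=
              mul_le_mul_of_nonneg_left r2 hK0
            linarith
        _ = (7 * (K * L) + K) * ‖x - y‖ ^ α := by ring
    intro x hx y hy
    have hxc : proj x ∈ closedBall (0 : Euc n) r := by rwa [hScyl] at hx
    have hyc : proj y ∈ closedBall (0 : Euc n) r := by rwa [hScyl] at hy
    rcases le_total (g (proj x)) (x (Fin.last n)) with hx' | hx' <;>
      rcases le_total (g (proj y)) (y (Fin.last n)) with hy' | hy'
    · have := hAA x (hAS x hxc hx') y (hAS y hyc hy')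
      have : |w x - w y| ≤ K * ‖x - y‖ ^ α := this
      nlinarith [hcoefsum x y, mul_nonneg hK0 (mul_nonneg hK0 (hcoefsum x y)), hK0, hL1,
        mul_nonneg hK0 (hcoefsum x y)]
    · have := hM y ⟨hyc, hy'⟩ x (hAS x hxc hx')
      rw [abs_sub_comm] at this
      rw [norm_sub_rev] at this
      exact this
    · exact hM x ⟨hxc, hx'⟩ y (hAS y hyc hy')
    · have := hBB x ⟨hxc, hx'⟩ y ⟨hyc, hy'⟩
      nlinarith [hcoefsum x y, mul_nonneg hK0 (hcoefsum x y)]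
  have hw'H : ∀ x ∈ closure (cyl (n := n) r), ∀ y ∈ closure (cyl (n := n) r),
      ‖w' x - w' y‖ ≤ (7 * (K * L * L) + 14 * (K * G) + K) * ‖x - y‖ ^ α := by
    have hBB : ∀ x ∈ B, ∀ y ∈ B,
        ‖w' x - w' y‖ ≤ (7 * (K * L * L) + 14 * (K * G)) * ‖x - y‖ ^ α := by
      intro x hx y hy
      rw [hw'B x hx, hw'B y hy]; exact hwb'H x hx y hy
    have hAA : ∀ x ∈ S, ∀ y ∈ S, ‖w' x - w' y‖ ≤ K * ‖x - y‖ ^ α := by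
      intro x hx y hy
      rw [hw'S x hx, hw'S y hy]; exact hv'H x hx y hy
    have hcoefsum : ∀ x y : Euc (n+1), 0 ≤ ‖x - y‖ ^ α := fun x y =>
      Real.rpow_nonneg (norm_nonneg _) α
    have hKL0 : 0 ≤ 7 * (K * L * L) + 14 * (K * G) := by positivity
    have hM : ∀ x ∈ B, ∀ y ∈ S,
        ‖w' x - w' y‖ ≤ (7 * (K * L * L) + 14 * (K * G) + K) * ‖x - y‖ ^ α := by
      intro x hx y hy
      obtain ⟨p, hpS, hpB, hd1, hd2⟩ := hseg x hx y hy
      have e1 := hBB x hx p hpB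
      have e2 := hAA p hpS y hy
      have r1 : ‖x - p‖ ^ α ≤ ‖x - y‖ ^ α := rpow_mono hα0 (norm_nonneg _) hd1
      have r2 : ‖p - y‖ ^ α ≤ ‖x - y‖ ^ α := rpow_mono hα0 (norm_nonneg _) hd2
      calc ‖w' x - w' y‖ ≤ ‖w' x - w' p‖ + ‖w' p - w' y‖ := norm_sub_le_norm_sub_add_norm_sub _ _ _
        _ ≤ (7 * (K * L * L) + 14 * (K * G)) * ‖x - y‖ ^ α + K * ‖x - y‖ ^ α := by
            have q1 := mul_le_mul_of_nonneg_left r1 hKL0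
            have q2 := mul_le_mul_of_nonneg_left r2 hK0
            linarith
        _ = (7 * (K * L * L) + 14 * (K * G) + K) * ‖x - y‖ ^ α := by ring
    intro x hx y hy
    have hxc : proj x ∈ closedBall (0 : Euc n) r := by rwa [hScyl] at hx
    have hyc : proj y ∈ closedBall (0 : Euc n) r := by rwa [hScyl] at hy
    rcases le_total (g (proj x)) (x (Fin.last n)) with hx' | hx' <;>
      rcases le_total (g (proj y)) (y (Fin.last n)) with hy' | hy'
    · have h0 := hAA x (hAS x hxc hx') y (hAS y hyc hy')
      nlinarith [hcoefsum x y, mul_nonneg (mul_nonneg hK0 hG0) (hcoefsum x y), hK0, hL1,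
        mul_nonneg (mul_nonneg (mul_nonneg hK0 (le_trans zero_le_one hL1)) (le_trans zero_le_one hL1)) (hcoefsum x y)]
    · have h0 := hM y ⟨hyc, hy'⟩ x (hAS x hxc hx')
      rw [norm_sub_rev] at h0
      rw [norm_sub_rev y x] at h0
      exact h0
    · exact hM x ⟨hxc, hx'⟩ y (hAS y hyc hy')
    · have h0 := hBB x ⟨hxc, hx'⟩ y ⟨hyc, hy'⟩
      nlinarith [hcoefsum x y, mul_nonneg hK0 (hcoefsum x y)]
  -- assembling
  refine ⟨w, w', fun x hx => hwS x hx, hdiff, ?_, ?_, ?_, ?_⟩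
  · intro x hx
    have hxc : proj x ∈ closedBall (0 : Euc n) r := by rwa [hScyl] at hx
    rcases le_total (g (proj x)) (x (Fin.last n)) with h | h
    · rw [hwS x (hAS x hxc h)]
      have := hvK x (hAS x hxc h)
      nlinarith [hK0, hpow1]
    · rw [hwB x ⟨hxc, h⟩]
      have := hwbBound x ⟨hxc, h⟩
      nlinarith [hK0, hpow1]
  · intro x hx
    have hxc : proj x ∈ closedBall (0 : Euc n) r := by rwa [hScyl] at hx
    rcases le_total (g (proj x)) (x (Fin.last n)) with h | h
    · rw [hw'S x (hAS x hxc h)]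
      have := hv'K x (hAS x hxc h)
      nlinarith [hK0, hpow1]
    · rw [hw'B x ⟨hxc, h⟩]
      have h0 := hwb'Bound x ⟨hxc, h⟩
      have hLval : L = 2 + 2*G := hLdef
      rw [hLval] at h0
      nlinarith [hK0, hpow2, mul_le_mul_of_nonneg_left hpow2 (by positivity : (0:ℝ) ≤ 14*K)]
  · intro x hx y hy
    have h0 := hwH x hx y hy
    have hel := Real.rpow_nonneg (norm_nonneg (x - y)) α
    have hcoef : 7 * (K * L) + K ≤ 200 * (1 + G) ^ 4 * K := by
      have hLval : L = 2 + 2*G := hLdef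
      rw [hLval]
      nlinarith [hK0, mul_le_mul_of_nonneg_left hpow2 (by positivity : (0:ℝ) ≤ 15*K)]
    exact h0.trans (mul_le_mul_of_nonneg_right hcoef hel)
  · intro x hx y hy
    have h0 := hw'H x hx y hy
    have hel := Real.rpow_nonneg (norm_nonneg (x - y)) α
    have hcoef : 7 * (K * L * L) + 14 * (K * G) + K ≤ 200 * (1 + G) ^ 4 * K := by
      have hLval : L = 2 + 2*G := hLdef
      rw [hLval]
      nlinarith [hK0, hG0, mul_le_mul_of_nonneg_left hpow3 (by positivity : (0:ℝ) ≤ 70*K)]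
    exact h0.trans (mul_le_mul_of_nonneg_right hcoef hel)


end
end

section
/- Let $\Omega \subset \mathbb{R}^N$ be a nonempty open set contained in an open affine half-space, and let $u \in C^0(\overline{\Omega}) \cap C^2(\Omega)$ be a bounded solution to $-\Delta u = 0$ in $\Omega$, $u \geq 0$ in $\Omega$, $u = 0$ on $\partial\Omega$. Then $u \equiv 0$ in $\Omega$. -/
open MeasureTheory Metric Set Real Filter ENNReal

open Topology RealInnerProductSpace

noncomputable section

/-- Second derivative test at a local max. -/
lemma sd_test {g g₁ : ℝ → ℝ} {L r : ℝ} (hr : 0 < r)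
    (hg : ∀ s ∈ Ioo (-r) r, HasDerivAt g (g₁ s) s)
    (hg₁ : HasDerivAt g₁ L 0) (hmax : IsLocalMax g 0) : L ≤ 0 := by
  by_contra hL
  push_neg at hL
  have h0 : (0:ℝ) ∈ Ioo (-r) r := by constructor <;> linarith
  have hd0 : g₁ 0 = 0 := by
    have := hmax.deriv_eq_zero
    rwa [(hg 0 h0).deriv] at this
  have hslope : Tendsto (fun s => (g₁ s) / s) (𝓝[>] (0:ℝ)) (𝓝 L) := by
    have h1 := hasDerivAt_iff_tendsto_slope.1 hg₁
    have hsub : Ioi (0:ℝ) ⊆ {0}ᶜ := fun x hx => ne_of_gt hx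
    have h2 := h1.mono_left (nhdsWithin_mono 0 hsub)
    simpa [slope_fun_def, slope_def_field, hd0, div_eq_inv_mul] using h2
  have hpos : ∀ᶠ s in 𝓝[>] (0:ℝ), 0 < g₁ s := by
    have h3 : ∀ᶠ s in 𝓝[>] (0:ℝ), 0 < g₁ s / s := hslope.eventually (eventually_gt_nhds hL)
    filter_upwards [h3, self_mem_nhdsWithin] with s hs hs'
    have := mul_pos hs (mem_Ioi.1 hs')
    rwa [div_mul_cancel₀ _ (ne_of_gt (mem_Ioi.1 hs'))] at this
  have hle : ∀ᶠ s in 𝓝[>] (0:ℝ), g s ≤ g 0 := (hmax.filter_mono nhdsWithin_le_nhds)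
  obtain ⟨b, hb0, hb⟩ := (nhdsGT_basis_of_exists_gt (by exact ⟨1, zero_lt_one⟩ : ∃ x : ℝ, 0 < x)).eventually_iff.mp (hpos.and hle)
  set b' := min (b/2) (r/2) with hb'
  have hb'0 : 0 < b' := lt_min (by linarith) (by linarith)
  have hb'b : b' < b := lt_of_le_of_lt (min_le_left _ _) (by linarith)
  have hb'r : b' < r := lt_of_le_of_lt (min_le_right _ _) (by linarith)
  have hsubI : Icc (0:ℝ) b' ⊆ Ioo (-r) r := fun x hx =>
    ⟨by linarith [hx.1], lt_of_le_of_lt hx.2 hb'r⟩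
  have hcont : ContinuousOn g (Icc 0 b') :=
    fun x hx => ((hg x (hsubI hx)).continuousAt).continuousWithinAt
  have hmono : StrictMonoOn g (Icc 0 b') := by
    apply strictMonoOn_of_deriv_pos (convex_Icc _ _) hcont
    intro x hx
    rw [interior_Icc] at hx
    rw [(hg x (hsubI (Ioo_subset_Icc_self hx))).deriv]
    exact (hb ⟨hx.1, lt_trans hx.2 hb'b⟩).1
  have h4 : g 0 < g b' := hmono (left_mem_Icc.2 hb'0.le) (right_mem_Icc.2 hb'0.le) hb'0
  have h5 : g b' ≤ g 0 := (hb ⟨hb'0, hb'b⟩).2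
  linarith


lemma interior_max {N : ℕ} {D : Set (Euc N)} (hD : IsOpen D) {w : Euc N → ℝ}
    (hw : ContDiffOn ℝ 2 w D) {x : Euc N} (hx : x ∈ D) (hmax : IsLocalMax w x) :
    lap w x ≤ 0 := by
  have hdiff : ∀ y ∈ D, DifferentiableAt ℝ w y := fun y hy =>
    (hw.differentiableOn (by norm_num)).differentiableAt (hD.mem_nhds hy)
  have hfd : ContDiffOn ℝ 1 (fderiv ℝ w) D := hw.fderiv_of_isOpen hD (by norm_num)
  have hfdx : DifferentiableAt ℝ (fderiv ℝ w) x :=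
    (hfd.differentiableOn (by norm_num)).differentiableAt (hD.mem_nhds hx)
  obtain ⟨r, hr0, hball⟩ := Metric.isOpen_iff.1 hD x hx
  apply Finset.sum_nonpos
  intro i _
  set v : Euc N := EuclideanSpace.single i 1 with hv
  have hvnorm : ‖v‖ = 1 := by simp [hv]
  set Lmap : ℝ → Euc N := fun s => x + s • v with hL
  have hLd : ∀ s : ℝ, HasDerivAt Lmap v s := by
    intro s
    simpa [hL] using ((hasDerivAt_id s).smul_const v).const_add x
  have hmem : ∀ s ∈ Ioo (-r) r, Lmap s ∈ D := by
    intro s hs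
    apply hball
    simp only [hL, mem_ball, dist_self_add_left]
    rw [norm_smul, hvnorm]
    simp [abs_lt]
    constructor <;> [linarith [hs.1]; exact hs.2]
  set G : Euc N → ℝ := fun y => fderiv ℝ w y v with hG
  have hGx : DifferentiableAt ℝ G x := hfdx.clm_apply (differentiableAt_const v)
  have hg : ∀ s ∈ Ioo (-r) r, HasDerivAt (w ∘ Lmap) (G (Lmap s)) s := by
    intro s hs
    exact ((hdiff _ (hmem s hs)).hasFDerivAt.comp_hasDerivAt s (hLd s))
  have hg₁ : HasDerivAt (G ∘ Lmap) (fderiv ℝ G x v) 0 := by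
    have h0 : Lmap 0 = x := by simp [hL]
    rw [← h0] at hGx
    have := (hGx.hasFDerivAt.comp_hasDerivAt 0 (hLd 0))
    rwa [h0] at this
  have hlmax : IsLocalMax (w ∘ Lmap) 0 := by
    have hcont : Tendsto Lmap (𝓝 0) (𝓝 x) := by
      rw [← (by simp [hL] : Lmap 0 = x)]
      exact ((hLd 0).continuousAt).tendsto
    have h2 := hcont.eventually hmax
    have h0 : Lmap 0 = x := by simp [hL]
    simpa [IsLocalMax, IsMaxFilter, h0] using h2
  have key : fderiv ℝ G x v ≤ 0 := sd_test hr0 hg hg₁ hlmax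
  -- identify fderiv (fun y => fderiv w y v) x v with fderiv G x v : they are the same function
  exact key


section Barrier
variable {N : ℕ} (ν x₀ : Euc N) (c ε δ C₀ : ℝ)

noncomputable def bar : Euc N → ℝ := fun x =>
  ε * (⟪x, ν⟫ - c) + δ * (⟪x - x₀, x - x₀⟫ - ((N:ℝ)+1) * ((⟪x, ν⟫ - c) * (⟪x, ν⟫ - c)) + C₀)

lemma bar_hasFDerivAt (y : Euc N) : ∃ Φ : Euc N →L[ℝ] ℝ, HasFDerivAt (bar ν x₀ c ε δ C₀) Φ y ∧
    ∀ h : Euc N, Φ h = ε * ⟪h, ν⟫ + δ * (2 * ⟪y - x₀, h⟫ - ((N:ℝ)+1) * (2 * (⟪y, ν⟫ - c) * ⟪h, ν⟫)) := by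
  have hA : HasFDerivAt (fun x : Euc N => ⟪x, ν⟫)
      ((fderivInnerCLM ℝ (y, ν)).comp ((ContinuousLinearMap.id ℝ (Euc N)).prod 0)) y :=
    (hasFDerivAt_id y).inner ℝ (hasFDerivAt_const ν y)
  have hB : HasFDerivAt (fun x : Euc N => ⟪x, ν⟫ - c) _ y := hA.sub_const c
  have hD : HasFDerivAt (fun x : Euc N => ⟪x - x₀, x - x₀⟫)
      ((fderivInnerCLM ℝ (y - x₀, y - x₀)).comp
        ((ContinuousLinearMap.id ℝ (Euc N)).prod (ContinuousLinearMap.id ℝ (Euc N)))) y := by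
    have h1 : HasFDerivAt (fun x : Euc N => x - x₀) (ContinuousLinearMap.id ℝ (Euc N)) y :=
      (hasFDerivAt_id y).sub_const x₀
    simpa using h1.inner ℝ h1
  have hC := hB.mul hB
  have hφ := ((hB.const_mul ε).add (((hD.sub (hC.const_mul ((N:ℝ)+1))).add_const C₀).const_mul δ))
  refine ⟨_, hφ, fun h => ?_⟩
  simp only [ContinuousLinearMap.add_apply, ContinuousLinearMap.smul_apply,
    ContinuousLinearMap.comp_apply, ContinuousLinearMap.prod_apply, ContinuousLinearMap.sub_apply,
    ContinuousLinearMap.coe_id', id_eq, ContinuousLinearMap.zero_apply, fderivInnerCLM_apply,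
    inner_zero_right, smul_eq_mul, add_zero, zero_add]
  rw [real_inner_comm h (y - x₀)]
  ring
end Barrier

namespace BarAux
variable {N : ℕ} {ν x₀ : Euc N} {c ε δ C₀ : ℝ}

noncomputable def F' (ν x₀ : Euc N) (c ε δ : ℝ) (i : Fin N) : Euc N → ℝ := fun y =>
  ε * ⟪(EuclideanSpace.single i 1 : Euc N), ν⟫ + δ * (2 * ⟪y - x₀, (EuclideanSpace.single i 1 : Euc N)⟫ -
    ((N:ℝ)+1) * (2 * (⟪y, ν⟫ - c) * ⟪(EuclideanSpace.single i 1 : Euc N), ν⟫))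

lemma fderiv_bar_apply (y : Euc N) (i : Fin N) :
    fderiv ℝ (bar ν x₀ c ε δ C₀) y (EuclideanSpace.single i 1) = F' ν x₀ c ε δ i y := by
  obtain ⟨Φ, hΦ, hval⟩ := bar_hasFDerivAt ν x₀ c ε δ C₀ y
  rw [hΦ.fderiv]; exact hval _

lemma fderiv_bar_funext (i : Fin N) :
    (fun y => fderiv ℝ (bar ν x₀ c ε δ C₀) y (EuclideanSpace.single i 1)) = F' ν x₀ c ε δ i :=
  funext fun y => fderiv_bar_apply y i

lemma F'_hasFDerivAt (i : Fin N) (y : Euc N) :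
    ∃ Ψ : Euc N →L[ℝ] ℝ, HasFDerivAt (F' ν x₀ c ε δ i) Ψ y ∧
      ∀ h : Euc N, Ψ h = δ * (2 * ⟪h, (EuclideanSpace.single i 1 : Euc N)⟫ -
        ((N:ℝ)+1) * (2 * ⟪h, ν⟫ * ⟪(EuclideanSpace.single i 1 : Euc N), ν⟫)) := by
  set e : Euc N := EuclideanSpace.single i 1
  have h1 : HasFDerivAt (fun y : Euc N => ⟪y - x₀, e⟫) _ y :=
    ((hasFDerivAt_id y).sub_const x₀).inner ℝ (hasFDerivAt_const e y)
  have hA : HasFDerivAt (fun x : Euc N => ⟪x, ν⟫) _ y :=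
    (hasFDerivAt_id y).inner ℝ (hasFDerivAt_const ν y)
  have h2 : HasFDerivAt (fun x : Euc N => 2 * (⟪x, ν⟫ - c) * ⟪e, ν⟫) _ y :=
    (((hA.sub_const c).const_mul 2).mul_const (⟪e, ν⟫ : ℝ))
  have hφ := (((h1.const_mul 2).sub (h2.const_mul ((N:ℝ)+1))).const_mul δ).const_add
    (ε * ⟪e, ν⟫)
  refine ⟨_, hφ, fun h => ?_⟩
  simp only [ContinuousLinearMap.add_apply, ContinuousLinearMap.smul_apply,
    ContinuousLinearMap.comp_apply, ContinuousLinearMap.prod_apply, ContinuousLinearMap.sub_apply,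
    ContinuousLinearMap.coe_id', id_eq, ContinuousLinearMap.zero_apply, fderivInnerCLM_apply,
    inner_zero_right, smul_eq_mul, add_zero, zero_add]
  ring

lemma lap_bar (hν : ‖ν‖ = 1) (x : Euc N) : lap (bar ν x₀ c ε δ C₀) x = -2*δ := by
  have hsum : ∑ i : Fin N, (ν i)^2 = 1 := by
    have h1 : (⟪ν, ν⟫ : ℝ) = 1 := by
      rw [real_inner_self_eq_norm_sq, hν]; norm_num
    rw [← h1, PiLp.inner_apply]
    simp [pow_two]
  unfold lap
  have hterm : ∀ i : Fin N,
      fderiv ℝ (fun y => fderiv ℝ (bar ν x₀ c ε δ C₀) y (EuclideanSpace.single i 1)) x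
        (EuclideanSpace.single i 1) = δ * (2 - ((N:ℝ)+1) * (2 * (ν i)^2)) := by
    intro i
    rw [fderiv_bar_funext]
    obtain ⟨Ψ, hΨ, hval⟩ := F'_hasFDerivAt (ν := ν) (x₀ := x₀) (c := c) (ε := ε) (δ := δ) i x
    rw [hΨ.fderiv, hval]
    have he : (⟪(EuclideanSpace.single i 1 : Euc N), (EuclideanSpace.single i 1 : Euc N)⟫ : ℝ) = 1 := by
      simp [EuclideanSpace.inner_single_left, EuclideanSpace.single_apply]
    have hen : (⟪(EuclideanSpace.single i 1 : Euc N), ν⟫ : ℝ) = ν i := by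
      simp [EuclideanSpace.inner_single_left]
    rw [he, hen]; ring
  rw [Finset.sum_congr rfl (fun i _ => hterm i)]
  have step : ∀ i : Fin N, δ * (2 - ((N:ℝ)+1) * (2 * (ν i)^2)) =
      δ * 2 - δ * ((N:ℝ)+1) * 2 * (ν i)^2 := fun i => by ring
  rw [Finset.sum_congr rfl (fun i _ => step i), Finset.sum_sub_distrib, Finset.sum_const,
    ← Finset.mul_sum, hsum, Finset.card_univ, Fintype.card_fin]
  ring

end BarAux

namespace BarAux
variable {N : ℕ} {ν x₀ : Euc N} {c ε δ C₀ : ℝ}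

lemma bar_diff (y : Euc N) : DifferentiableAt ℝ (bar ν x₀ c ε δ C₀) y := by
  obtain ⟨Φ, hΦ, -⟩ := bar_hasFDerivAt ν x₀ c ε δ C₀ y
  exact hΦ.differentiableAt

lemma bar_contDiff : ContDiff ℝ 2 (bar ν x₀ c ε δ C₀) := by
  have h1 : ContDiff ℝ 2 (fun x : Euc N => (⟪x, ν⟫ : ℝ)) := (contDiff_id.inner ℝ contDiff_const)
  have h2 : ContDiff ℝ 2 (fun x : Euc N => (⟪x - x₀, x - x₀⟫ : ℝ)) :=
    ((contDiff_id.sub contDiff_const).inner ℝ (contDiff_id.sub contDiff_const))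
  exact (contDiff_const.mul (h1.sub contDiff_const)).add
    (contDiff_const.mul (((h2.sub (contDiff_const.mul ((h1.sub contDiff_const).mul
      (h1.sub contDiff_const)))).add contDiff_const)))

lemma lap_sub {Ω : Set (Euc N)} (hΩo : IsOpen Ω) {u : Euc N → ℝ} (hu2 : ContDiffOn ℝ 2 u Ω)
    {x : Euc N} (hx : x ∈ Ω) :
    lap (fun z => u z - bar ν x₀ c ε δ C₀ z) x = lap u x - lap (bar ν x₀ c ε δ C₀) x := by
  have hud : ∀ y ∈ Ω, DifferentiableAt ℝ u y := fun y hy =>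
    (hu2.differentiableOn (by norm_num)).differentiableAt (hΩo.mem_nhds hy)
  have hufd : DifferentiableAt ℝ (fderiv ℝ u) x :=
    ((hu2.fderiv_of_isOpen (m := 1) hΩo (by norm_num)).differentiableOn
      one_ne_zero).differentiableAt (hΩo.mem_nhds hx)
  unfold lap
  rw [← Finset.sum_sub_distrib]
  apply Finset.sum_congr rfl
  intro i _
  set e : Euc N := EuclideanSpace.single i 1
  have ev : (fun y => fderiv ℝ (fun z => u z - bar ν x₀ c ε δ C₀ z) y e)
      =ᶠ[𝓝 x] (fun y => fderiv ℝ u y e - fderiv ℝ (bar ν x₀ c ε δ C₀) y e) := by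
    filter_upwards [hΩo.mem_nhds hx] with y hy
    rw [fderiv_fun_sub (hud y hy) (bar_diff y)]
    rfl
  have hu_i : DifferentiableAt ℝ (fun y => fderiv ℝ u y e) x :=
    hufd.clm_apply (differentiableAt_const e)
  have hbar_i : DifferentiableAt ℝ (fun y => fderiv ℝ (bar ν x₀ c ε δ C₀) y e) x := by
    rw [fderiv_bar_funext]
    obtain ⟨Ψ, hΨ, -⟩ := F'_hasFDerivAt (ν := ν) (x₀ := x₀) (c := c) (ε := ε) (δ := δ) i x
    exact hΨ.differentiableAt
  rw [ev.fderiv_eq, fderiv_fun_sub hu_i hbar_i]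
  rfl

end BarAux


set_option maxHeartbeats 1000000 in
/-- Liouville-type result: a bounded nonnegative harmonic function on an open
set contained in an open affine half-space, vanishing on the boundary, is
identically zero. -/
theorem stmt_15 (N : ℕ) (Ω : Set (Euc N)) (hΩo : IsOpen Ω) (hΩne : Ω.Nonempty)
    -- Ω is contained in an open affine half-space
    (ν : Euc N) (c : ℝ) (hν : ‖ν‖ = 1)
    (hhalf : Ω ⊆ {x : Euc N | c < (inner ℝ x ν : ℝ)})
    (u : Euc N → ℝ)
    -- u ∈ C⁰(closure Ω) ∩ C²(Ω), bounded
    (hu0 : ContinuousOn u (closure Ω))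
    (hu2 : ContDiffOn ℝ 2 u Ω)
    (hbdd : ∃ M : ℝ, ∀ x ∈ Ω, |u x| ≤ M)
    (harm : ∀ x ∈ Ω, lap u x = 0)
    (hpos : ∀ x ∈ Ω, 0 ≤ u x)
    (hbd : ∀ x ∈ frontier Ω, u x = 0) :
    ∀ x ∈ Ω, u x = 0 := by
  obtain ⟨M, hM⟩ := hbdd
  set M' : ℝ := max M 0 with hM'def
  have hM'0 : 0 ≤ M' := le_max_right _ _
  have hM' : ∀ x ∈ Ω, u x ≤ M' := fun x hx =>
    le_trans (abs_le.1 (hM x hx)).2 (le_max_left _ _)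
  have hinnercont : Continuous (fun x : Euc N => (inner ℝ x ν : ℝ)) :=
    continuous_id.inner continuous_const
  -- u ≤ M' on the closure
  have hclM : ∀ y ∈ closure Ω, u y ≤ M' := by
    intro y hy
    have hne : (𝓝[Ω] y).NeBot := mem_closure_iff_nhdsWithin_neBot.1 hy
    have hcw : Filter.Tendsto u (𝓝[Ω] y) (𝓝 (u y)) :=
      ((hu0 y hy).mono subset_closure).tendsto
    refine le_of_tendsto hcw ?_
    filter_upwards [self_mem_nhdsWithin] with z hz using hM' z hz
  -- c ≤ ⟪y, ν⟫ on the closure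
  have hclc : ∀ y ∈ closure Ω, c ≤ (inner ℝ y ν : ℝ) := by
    have : closure Ω ⊆ {x : Euc N | c ≤ (inner ℝ x ν : ℝ)} :=
      closure_minimal (fun x hx => show c ≤ _ from le_of_lt (hhalf hx))
        (isClosed_le continuous_const hinnercont)
    exact fun y hy => this hy
  intro x₀ hx₀
  have ht₀ : c < (inner ℝ x₀ ν : ℝ) := hhalf hx₀
  set t₀ : ℝ := (inner ℝ x₀ ν : ℝ) with ht₀def
  -- key quantitative estimate
  have key : ∀ ε : ℝ, 0 < ε → ε * (t₀ - c) < M' + 1 → ∀ δ : ℝ, 0 < δ →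
      u x₀ ≤ ε * (t₀ - c) + δ * (((N:ℝ)+1) * (((M'+1)/ε) * ((M'+1)/ε))) := by
    intro ε hε hεs δ hδ
    set R : ℝ := c + (M'+1)/ε with hRdef
    have hRc : R - c = (M'+1)/ε := by rw [hRdef]; ring
    set C₀ : ℝ := ((N:ℝ)+1) * (((M'+1)/ε) * ((M'+1)/ε)) with hC₀def
    set φ : Euc N → ℝ := bar ν x₀ c ε δ C₀ with hφdef
    set w : Euc N → ℝ := fun z => u z - φ z with hwdef
    set H : Set (Euc N) := {x | (inner ℝ x ν : ℝ) < R} with hHdef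
    have hHo : IsOpen H := isOpen_lt hinnercont continuous_const
    set Ω' : Set (Euc N) := Ω ∩ H with hΩ'def
    have hΩ'o : IsOpen Ω' := hΩo.inter hHo
    have hx₀H : x₀ ∈ H := by
      simp only [hHdef, mem_setOf_eq, hRdef]
      rw [show (M'+1)/ε = (M'+1)/ε from rfl]
      have : t₀ - c < (M'+1)/ε := (lt_div_iff₀ hε).2 (by linarith [mul_comm ε (t₀ - c)])
      linarith
    have hx₀' : x₀ ∈ Ω' := ⟨hx₀, hx₀H⟩
    have hclΩ'Ω : closure Ω' ⊆ closure Ω := closure_mono inter_subset_left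
    have hclH : closure H ⊆ {x : Euc N | (inner ℝ x ν : ℝ) ≤ R} :=
      closure_minimal (fun x hx => show (inner ℝ x ν : ℝ) ≤ R from le_of_lt hx) (isClosed_le hinnercont continuous_const)
    have hclΩ'R : ∀ y ∈ closure Ω', (inner ℝ y ν : ℝ) ≤ R := fun y hy =>
      hclH ((closure_mono inter_subset_right) hy)
    -- nonnegativity of the barrier on the relevant strip
    have hφ0 : ∀ y : Euc N, c ≤ (inner ℝ y ν : ℝ) → (inner ℝ y ν : ℝ) ≤ R → 0 ≤ φ y := by
      intro y h1 h2
      have h3 : (0:ℝ) ≤ ⟪y - x₀, y - x₀⟫ := real_inner_self_nonneg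
      have h4 : ((inner ℝ y ν : ℝ) - c) * ((inner ℝ y ν : ℝ) - c) ≤ ((M'+1)/ε) * ((M'+1)/ε) := by
        have h5 : (inner ℝ y ν : ℝ) - c ≤ (M'+1)/ε := by rw [← hRc]; linarith
        nlinarith
      have h6 : 0 ≤ ε * ((inner ℝ y ν : ℝ) - c) := mul_nonneg hε.le (by linarith)
      simp only [hφdef, bar]
      rw [hC₀def]
      nlinarith [mul_nonneg hδ.le h3,
        mul_nonneg (mul_nonneg hδ.le (by positivity : (0:ℝ) ≤ (N:ℝ)+1)) (sub_nonneg.2 h4), h6]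
    -- continuity of w on closure Ω'
    have hwc : ContinuousOn w (closure Ω') :=
      (hu0.mono hclΩ'Ω).sub (BarAux.bar_contDiff.continuous.continuousOn)
    -- the set where w ≥ w x₀
    set S : Set (Euc N) := closure Ω' ∩ w ⁻¹' (Ici (w x₀)) with hSdef
    have hScl : IsClosed S := hwc.preimage_isClosed_of_isClosed isClosed_closure isClosed_Ici
    have hx₀S : x₀ ∈ S := by
      refine ⟨subset_closure hx₀', ?_⟩
      simp
    have hSbdd : Bornology.IsBounded S := by
      apply (Metric.isBounded_closedBall
        (x := x₀) (r := Real.sqrt ((M' - w x₀)/δ))).subset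
      intro y hy
      obtain ⟨hy1, hy2⟩ := hy
      have hyΩcl : y ∈ closure Ω := hclΩ'Ω hy1
      have h1 : c ≤ (inner ℝ y ν : ℝ) := hclc y hyΩcl
      have h2 : (inner ℝ y ν : ℝ) ≤ R := hclΩ'R y hy1
      have h3 : u y ≤ M' := hclM y hyΩcl
      have h4 : ((inner ℝ y ν : ℝ) - c) * ((inner ℝ y ν : ℝ) - c) ≤ ((M'+1)/ε) * ((M'+1)/ε) := by
        have h5 : (inner ℝ y ν : ℝ) - c ≤ (M'+1)/ε := by rw [← hRc]; linarith
        nlinarith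
      have h6 : 0 ≤ ε * ((inner ℝ y ν : ℝ) - c) := mul_nonneg hε.le (by linarith)
      have h7 : w x₀ ≤ w y := hy2
      have hφy : δ * ⟪y - x₀, y - x₀⟫ ≤ φ y := by
        show δ * _ ≤ bar ν x₀ c ε δ C₀ y
        simp only [bar]
        rw [hC₀def]
        nlinarith [mul_nonneg (mul_nonneg hδ.le (by positivity : (0:ℝ) ≤ (N:ℝ)+1))
          (sub_nonneg.2 h4), h6]
      have h8 : δ * ⟪y - x₀, y - x₀⟫ ≤ M' - w x₀ := by
        have hwy : w y ≤ u y - δ * ⟪y - x₀, y - x₀⟫ := by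
          show u y - φ y ≤ _
          linarith
        linarith
      have h9 : ⟪y - x₀, y - x₀⟫ ≤ (M' - w x₀)/δ := by
        rw [le_div_iff₀ hδ]; linarith [mul_comm δ (⟪y - x₀, y - x₀⟫ : ℝ)]
      have h10 : ‖y - x₀‖^2 ≤ (M' - w x₀)/δ := by
        rwa [← real_inner_self_eq_norm_sq]
      have h11 : ‖y - x₀‖ ≤ Real.sqrt ((M' - w x₀)/δ) :=
        Real.le_sqrt_of_sq_le h10
      simpa [Metric.mem_closedBall, dist_eq_norm] using h11
    have hScomp : IsCompact S := Metric.isCompact_of_isClosed_isBounded hScl hSbdd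
    obtain ⟨xm, hxmS, hmax⟩ := hScomp.exists_isMaxOn ⟨x₀, hx₀S⟩
      (hwc.mono (inter_subset_left))
    have hglobal : ∀ y ∈ closure Ω', w y ≤ w xm := by
      intro y hy
      by_cases hc : w x₀ ≤ w y
      · exact hmax ⟨hy, hc⟩
      · exact le_trans (le_of_not_ge hc) (hmax hx₀S)
    have hwx₀ : w x₀ ≤ w xm := hmax hx₀S
    -- xm cannot be in Ω'
    have hxmΩ' : xm ∉ Ω' := by
      intro hxmΩ'
      have hlocmax : IsLocalMax w xm := by
        filter_upwards [hΩ'o.mem_nhds hxmΩ'] with z hz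
        exact hglobal z (subset_closure hz)
      have hlap : lap w xm ≤ 0 := by
        refine interior_max hΩ'o ?_ hxmΩ' hlocmax
        exact (hu2.mono inter_subset_left).sub (BarAux.bar_contDiff.contDiffOn)
      have h1 : lap w xm = lap u xm - lap φ xm := BarAux.lap_sub hΩo hu2 hxmΩ'.1
      rw [harm xm hxmΩ'.1, BarAux.lap_bar hν xm] at h1
      rw [h1] at hlap
      linarith
    -- so xm is on the frontier of Ω'
    have hxmfr : xm ∈ frontier Ω' := by
      rw [hΩ'o.frontier_eq]
      exact ⟨hxmS.1, hxmΩ'⟩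
    have hwxm : w xm ≤ 0 := by
      have := frontier_inter_subset Ω H hxmfr
      rcases this with ⟨hf1, hf2⟩ | ⟨hf1, hf2⟩
      · -- on frontier Ω: u = 0, φ ≥ 0
        have hu0' : u xm = 0 := hbd xm hf1
        have hclΩxm : xm ∈ closure Ω := frontier_subset_closure hf1
        have h1 : c ≤ (inner ℝ xm ν : ℝ) := hclc xm hclΩxm
        have h2 : (inner ℝ xm ν : ℝ) ≤ R := hclH hf2
        have h3 : 0 ≤ φ xm := hφ0 xm h1 h2
        show u xm - φ xm ≤ 0
        rw [hu0']; linarith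
      · -- on the hyperplane {⟪·,ν⟫ = R}
        have h2a : (inner ℝ xm ν : ℝ) ≤ R := hclH (frontier_subset_closure hf2)
        have h2b : xm ∈ closure Hᶜ := by
          rw [← frontier_compl] at hf2
          exact frontier_subset_closure hf2
        have hHc : closure Hᶜ ⊆ {x : Euc N | R ≤ (inner ℝ x ν : ℝ)} :=
          closure_minimal (fun x hx => show R ≤ (inner ℝ x ν : ℝ) from not_lt.1 hx)
            (isClosed_le continuous_const hinnercont)
        have htR : (inner ℝ xm ν : ℝ) = R := le_antisymm h2a (hHc h2b)
        have huxm : u xm ≤ M' := hclM xm hf1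
        have hin : (0:ℝ) ≤ ⟪xm - x₀, xm - x₀⟫ := real_inner_self_nonneg
        have hεR : ε * (R - c) = M' + 1 := by
          rw [hRc, mul_comm, div_mul_cancel₀ _ (ne_of_gt hε)]
        show u xm - φ xm ≤ 0
        have hφval : φ xm = ε * ((inner ℝ xm ν : ℝ) - c) + δ * (⟪xm - x₀, xm - x₀⟫
            - ((N:ℝ)+1) * (((inner ℝ xm ν : ℝ) - c) * ((inner ℝ xm ν : ℝ) - c)) + C₀) := rfl
        rw [hφval, htR, hC₀def, ← hRc]
        nlinarith
    -- conclude
    have hfin : u x₀ ≤ φ x₀ := by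
      have := le_trans hwx₀ hwxm
      simp only [hwdef] at this
      linarith
    have hφx₀ : φ x₀ = ε * (t₀ - c) + δ * (0 - ((N:ℝ)+1) * ((t₀ - c)*(t₀ - c)) + C₀) := by
      simp only [hφdef, bar, sub_self, inner_zero_left, ht₀def]
    rw [hφx₀] at hfin
    have hq : 0 ≤ δ * (((N:ℝ)+1) * ((t₀ - c)*(t₀ - c))) :=
      mul_nonneg hδ.le (mul_nonneg (by positivity) (mul_self_nonneg _))
    rw [hC₀def] at hfin ⊢
    nlinarith
  -- pass to the limit
  have hA : u x₀ ≤ 0 := by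
    by_contra hA0
    push_neg at hA0
    have hux₀M : u x₀ ≤ M' := hM' x₀ hx₀
    set ε : ℝ := u x₀ / (2*(t₀ - c)) with hεdef
    have hε : 0 < ε := by
      apply div_pos hA0; linarith
    have hεs : ε * (t₀ - c) = u x₀ / 2 := by
      have h : t₀ - c ≠ 0 := ne_of_gt (by linarith)
      rw [hεdef, div_mul_eq_mul_div, mul_comm (2:ℝ) (t₀-c), ← div_div,
        mul_div_cancel_right₀ _ h]
    have hεsmall : ε * (t₀ - c) < M' + 1 := by rw [hεs]; linarith
    set Cε : ℝ := ((N:ℝ)+1) * (((M'+1)/ε) * ((M'+1)/ε)) with hCεdef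
    have hCε0 : 0 ≤ Cε := by positivity
    set δ : ℝ := (u x₀/4)/(Cε + 1) with hδdef
    have hδ : 0 < δ := by apply div_pos (by linarith); linarith
    have h1 := key ε hε hεsmall δ hδ
    have h2 : δ * Cε ≤ u x₀/4 := by
      have h3 : δ * (Cε + 1) = u x₀/4 := by
        rw [hδdef, div_mul_cancel₀ _ (by linarith : Cε + 1 ≠ 0)]
      nlinarith
    rw [hεs, ← hCεdef] at h1
    linarith
  exact le_antisymm hA (hpos x₀ hx₀)

end
end
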